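/- arXiv:0912.4907 — 5 statements merged into one kernel-verified Lean document; each statement's English description precedes it below -/
import Mathlib

section
/- Let n be a unit vector in ℝ³ and let X ∈ SO(3) be the rotation by π about n, i.e. X n = n and X v = −v for every vector v orthogonal to n. Let A, B, C ∈ SO(3) be such that each of A, B, C fixes some nonzero vector orthogonal to n, and let R ∈ SO(3) satisfy R n = n. If A · B · C = R, then C · B · A = R⁻¹. -/
open scoped RealInnerProductSpace

/-- Membership in SO(3): a 3×3 real orthogonal matrix with determinant 1. -/
def IsSO3 (A : Matrix (Fin 3) (Fin 3) ℝ) : Prop :=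
  A.transpose * A = 1 ∧ A.det = 1

/-- The action of a 3×3 real matrix on Euclidean 3-space. -/
noncomputable def matVec (A : Matrix (Fin 3) (Fin 3) ℝ)
    (v : EuclideanSpace ℝ (Fin 3)) : EuclideanSpace ℝ (Fin 3) :=
  Matrix.toEuclideanLin A v

namespace RotRev
open Matrix

def D : Matrix (Fin 3) (Fin 3) ℝ := !![(-1:ℝ),0,0; 0,1,0; 0,0,(-1:ℝ)]

private lemma inner_eq_dot (x y : EuclideanSpace ℝ (Fin 3)) :
    ⟪x, y⟫ = dotProduct (x : Fin 3 → ℝ) (y : Fin 3 → ℝ) := by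
  simp [PiLp.inner_apply, dotProduct, mul_comm]

private lemma PPt (s nv t : Fin 3 → ℝ)
    (hss : s ⬝ᵥ s = 1) (hnn : nv ⬝ᵥ nv = 1) (htt : t ⬝ᵥ t = 1)
    (hsn : s ⬝ᵥ nv = 0) (hst : s ⬝ᵥ t = 0) (hnt : nv ⬝ᵥ t = 0) :
    (Matrix.of ![s, nv, t]) * (Matrix.of ![s, nv, t])ᵀ = 1 := by
  simp only [dotProduct, Fin.sum_univ_three] at hss hnn htt hsn hst hnt
  ext i j
  fin_cases i <;> fin_cases j <;>
    simp only [Matrix.mul_apply, Fin.sum_univ_three, Matrix.transpose_apply, Matrix.of_apply,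
      Matrix.cons_val_zero, Matrix.cons_val_one, Matrix.head_cons, Matrix.cons_val_two,
      Matrix.tail_cons, Matrix.one_apply, Fin.isValue, Matrix.cons_val', Matrix.empty_val',
      Matrix.cons_val_fin_one] <;>
    norm_num [Fin.ext_iff] <;> linarith

private lemma X_eq (s nv t : Fin 3 → ℝ) (X : Matrix (Fin 3) (Fin 3) ℝ)
    (hP : (Matrix.of ![s, nv, t]) * (Matrix.of ![s, nv, t])ᵀ = 1)
    (hXs : X.mulVec s = -s) (hXn : X.mulVec nv = nv) (hXt : X.mulVec t = -t) :
    X = (Matrix.of ![s, nv, t])ᵀ * D * (Matrix.of ![s, nv, t]) := by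
  set P := Matrix.of ![s, nv, t] with hPdef
  have hPtP : Pᵀ * P = 1 := mul_eq_one_comm.mp hP
  have h1 : X * Pᵀ = Pᵀ * D := by
    ext i j
    have hs := congrFun hXs i
    have hn := congrFun hXn i
    have ht := congrFun hXt i
    simp only [Matrix.mulVec, dotProduct, Fin.sum_univ_three, Pi.neg_apply] at hs hn ht
    fin_cases j <;>
      simp only [hPdef, Matrix.mul_apply, Fin.sum_univ_three, Matrix.transpose_apply,
        Matrix.of_apply, Matrix.cons_val_zero, Matrix.cons_val_one, Matrix.head_cons,
        Matrix.cons_val_two, Matrix.tail_cons, Fin.isValue, Matrix.cons_val', Matrix.empty_val',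
        Matrix.cons_val_fin_one, D] <;>
      norm_num [Fin.ext_iff] <;> linarith
  calc X = X * (Pᵀ * P) := by rw [hPtP, mul_one]
    _ = (X * Pᵀ) * P := by rw [Matrix.mul_assoc]
    _ = Pᵀ * D * P := by rw [h1]

private lemma collapse (P : Matrix (Fin 3) (Fin 3) ℝ) (hP : P * Pᵀ = 1)
    (E F : Matrix (Fin 3) (Fin 3) ℝ) :
    (Pᵀ * E * P) * (Pᵀ * F * P) = Pᵀ * (E * F) * P := by
  calc (Pᵀ * E * P) * (Pᵀ * F * P) = Pᵀ * E * (P * Pᵀ) * F * P := by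
        simp only [Matrix.mul_assoc]
    _ = Pᵀ * (E * F) * P := by
        rw [hP, Matrix.mul_one]
        simp only [Matrix.mul_assoc]

private lemma sandwich (X U V : Matrix (Fin 3) (Fin 3) ℝ) (hX : X * X = 1) :
    (X * U * X) * (X * V * X) = X * (U * V) * X := by
  calc (X * U * X) * (X * V * X) = X * U * (X * X) * V * X := by
        simp only [Matrix.mul_assoc]
    _ = X * (U * V) * X := by
        rw [hX, Matrix.mul_one]
        simp only [Matrix.mul_assoc]

private lemma conj (P X M : Matrix (Fin 3) (Fin 3) ℝ)
    (hP : P * Pᵀ = 1) (hX : X = Pᵀ * D * P)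
    (hM : Mᵀ * M = 1) (hdet : M.det = 1)
    (hMe : (P * M * Pᵀ).mulVec ![(1:ℝ),0,0] = ![(1:ℝ),0,0]) :
    M * X * M = X := by
  have hPtP : Pᵀ * P = 1 := mul_eq_one_comm.mp hP
  set M' := P * M * Pᵀ with hM'def
  have hM'o : M'ᵀ * M' = 1 := by
    have : M'ᵀ * M' = P * (Mᵀ * (Pᵀ * P) * M) * Pᵀ := by
      rw [hM'def]
      simp only [Matrix.transpose_mul, Matrix.transpose_transpose, Matrix.mul_assoc]
    rw [this, hPtP, Matrix.mul_one, hM, Matrix.mul_one]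
    exact hP
  have hM'det : M'.det = 1 := by
    have h2 : P.det * Pᵀ.det = 1 := by rw [← Matrix.det_mul, hP, Matrix.det_one]
    rw [hM'def, Matrix.det_mul, Matrix.det_mul, hdet]
    nlinarith [h2]
  have hrow : M'ᵀ.mulVec ![(1:ℝ),0,0] = ![(1:ℝ),0,0] := by
    conv_lhs => rw [← hMe]
    rw [Matrix.mulVec_mulVec, hM'o, Matrix.one_mulVec]
  have ecol : ∀ i, M' i 0 = ![(1:ℝ),0,0] i := by
    intro i
    have := congrFun hMe i
    simpa [Matrix.mulVec, dotProduct, Fin.sum_univ_three] using this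
  have erow : ∀ j, M' 0 j = ![(1:ℝ),0,0] j := by
    intro j
    have := congrFun hrow j
    simpa [Matrix.mulVec, dotProduct, Fin.sum_univ_three, Matrix.transpose_apply] using this
  have e00 : M' 0 0 = 1 := by simpa using erow 0
  have e01 : M' 0 1 = 0 := by simpa using erow 1
  have e02 : M' 0 2 = 0 := by simpa using erow 2
  have e10 : M' 1 0 = 0 := by simpa using ecol 1
  have e20 : M' 2 0 = 0 := by simpa using ecol 2
  have o11 : M' 0 1 * M' 0 1 + M' 1 1 * M' 1 1 + M' 2 1 * M' 2 1 = 1 := by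
    have := congrFun (congrFun hM'o 1) 1
    simpa [Matrix.mul_apply, Matrix.transpose_apply, Fin.sum_univ_three, Matrix.one_apply]
      using this
  have o12 : M' 0 1 * M' 0 2 + M' 1 1 * M' 1 2 + M' 2 1 * M' 2 2 = 0 := by
    have := congrFun (congrFun hM'o 1) 2
    simpa [Matrix.mul_apply, Matrix.transpose_apply, Fin.sum_univ_three, Matrix.one_apply,
      Fin.ext_iff] using this
  rw [Matrix.det_fin_three] at hM'det
  rw [e01] at o11 o12
  rw [e00, e01, e02, e10, e20] at hM'det
  have h1 : M' 1 1 * M' 1 1 + M' 2 1 * M' 2 1 = 1 := by linarith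
  have hdet' : M' 1 1 * M' 2 2 - M' 1 2 * M' 2 1 = 1 := by linarith
  have hab : M' 1 1 * M' 1 2 + M' 2 1 * M' 2 2 = 0 := by linarith
  have hd : M' 2 2 = M' 1 1 := by
    linear_combination M' 1 1 * hdet' + M' 2 1 * hab - M' 2 2 * h1
  have hb : M' 1 2 = -(M' 2 1) := by
    linear_combination (-(M' 2 1)) * hdet' + M' 1 1 * hab - M' 1 2 * h1
  have key : M' * D * M' = D := by
    ext i j
    fin_cases i <;> fin_cases j <;>
      simp [Matrix.mul_apply, Fin.sum_univ_three, D, e00, e01, e02, e10, e20, hb, hd,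
        Matrix.vecHead, Matrix.vecTail] <;>
      first
        | linear_combination h1
        | linear_combination (-1 : ℝ) * h1
        | ring
  have hMeq : M = Pᵀ * M' * P := by
    rw [hM'def]
    calc M = (Pᵀ * P) * M * (Pᵀ * P) := by rw [hPtP, Matrix.one_mul, Matrix.mul_one]
      _ = Pᵀ * (P * M * Pᵀ) * P := by simp only [Matrix.mul_assoc]
  rw [hMeq, hX, collapse P hP, collapse P hP, key]

/-- The basis built from a normalized s₀, n, and their cross product. -/
private lemma setup (nv s0 : Fin 3 → ℝ) (hnn : nv ⬝ᵥ nv = 1)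
    (hs0 : s0 ≠ 0) (hs0n : s0 ⬝ᵥ nv = 0)
    (X : Matrix (Fin 3) (Fin 3) ℝ) (hXn : X.mulVec nv = nv)
    (hXperp : ∀ v : Fin 3 → ℝ, nv ⬝ᵥ v = 0 → X.mulVec v = -v) :
    ∃ P : Matrix (Fin 3) (Fin 3) ℝ, ∃ c : ℝ,
      P * Pᵀ = 1 ∧ X = Pᵀ * D * P ∧ P.mulVec nv = ![(0:ℝ),1,0] ∧
        P.mulVec (c • s0) = ![(1:ℝ),0,0] ∧ ((c • s0) ⬝ᵥ nv) = 0 := by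
  have h0 : 0 ≤ s0 ⬝ᵥ s0 := Finset.sum_nonneg fun i _ => mul_self_nonneg _
  have hne : s0 ⬝ᵥ s0 ≠ 0 := fun h => hs0 ((dotProduct_self_eq_zero).mp h)
  have hq : (0:ℝ) < s0 ⬝ᵥ s0 := lt_of_le_of_ne h0 (Ne.symm hne)
  set c : ℝ := (Real.sqrt (s0 ⬝ᵥ s0))⁻¹ with hc
  set s : Fin 3 → ℝ := c • s0 with hs
  have hsqrt : Real.sqrt (s0 ⬝ᵥ s0) ^ 2 = s0 ⬝ᵥ s0 := Real.sq_sqrt hq.le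
  have hsqrtne : Real.sqrt (s0 ⬝ᵥ s0) ≠ 0 := by positivity
  have hss : s ⬝ᵥ s = 1 := by
    rw [hs, smul_dotProduct, dotProduct_smul, hc, smul_eq_mul, smul_eq_mul]
    field_simp
    exact hsqrt.symm
  have hsn : s ⬝ᵥ nv = 0 := by
    rw [hs, smul_dotProduct, hs0n, smul_zero]
  set t : Fin 3 → ℝ :=
    ![nv 1 * s 2 - nv 2 * s 1, nv 2 * s 0 - nv 0 * s 2, nv 0 * s 1 - nv 1 * s 0] with ht
  have hss' := hss; have hnn' := hnn; have hsn' := hsn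
  simp only [dotProduct, Fin.sum_univ_three] at hss' hnn' hsn'
  have htt : t ⬝ᵥ t = 1 := by
    simp only [ht, dotProduct, Fin.sum_univ_three, Matrix.cons_val_zero, Matrix.cons_val_one,
      Matrix.head_cons, Matrix.cons_val_two, Matrix.tail_cons]
    linear_combination (s 0 * s 0 + s 1 * s 1 + s 2 * s 2) * hnn' + hss'
      - (s 0 * nv 0 + s 1 * nv 1 + s 2 * nv 2 + 1) * hsn' + hsn'
  have hst : s ⬝ᵥ t = 0 := by
    simp only [ht, dotProduct, Fin.sum_univ_three, Matrix.cons_val_zero, Matrix.cons_val_one,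
      Matrix.head_cons, Matrix.cons_val_two, Matrix.tail_cons]
    ring
  have hnt : nv ⬝ᵥ t = 0 := by
    simp only [ht, dotProduct, Fin.sum_univ_three, Matrix.cons_val_zero, Matrix.cons_val_one,
      Matrix.head_cons, Matrix.cons_val_two, Matrix.tail_cons]
    ring
  have hP := PPt s nv t hss hnn htt hsn hst hnt
  have hXs : X.mulVec s = -s := hXperp s (by rw [dotProduct_comm]; exact hsn)
  have hXt : X.mulVec t = -t := hXperp t hnt
  have hXeq := X_eq s nv t X hP hXs hXn hXt
  have htn : t ⬝ᵥ nv = 0 := by rw [dotProduct_comm]; exact hnt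
  have hts : t ⬝ᵥ s = 0 := by rw [dotProduct_comm]; exact hst
  have hns : nv ⬝ᵥ s = 0 := by rw [dotProduct_comm]; exact hsn
  refine ⟨Matrix.of ![s, nv, t], c, hP, hXeq, ?_, ?_, hsn⟩
  · simp [Matrix.cons_mulVec, Matrix.empty_mulVec, hsn, hnn, htn]
  · rw [← hs]
    simp [Matrix.cons_mulVec, Matrix.empty_mulVec, hss, hns, hts]

private lemma MXM (nv : Fin 3 → ℝ) (hnn : nv ⬝ᵥ nv = 1)
    (X M : Matrix (Fin 3) (Fin 3) ℝ) (hXn : X.mulVec nv = nv)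
    (hXperp : ∀ v : Fin 3 → ℝ, nv ⬝ᵥ v = 0 → X.mulVec v = -v)
    (hM : Mᵀ * M = 1) (hdet : M.det = 1)
    (s0 : Fin 3 → ℝ) (hs0 : s0 ≠ 0) (hs0n : s0 ⬝ᵥ nv = 0) (hMs : M.mulVec s0 = s0) :
    M * X * M = X := by
  obtain ⟨P, c, hP, hXeq, hPn, hPs, _⟩ := setup nv s0 hnn hs0 hs0n X hXn hXperp
  have hPtP : Pᵀ * P = 1 := mul_eq_one_comm.mp hP
  have hMs' : M.mulVec (c • s0) = c • s0 := by rw [Matrix.mulVec_smul, hMs]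
  have hMe : (P * M * Pᵀ).mulVec ![(1:ℝ),0,0] = ![(1:ℝ),0,0] := by
    rw [← hPs, Matrix.mulVec_mulVec,
      show P * M * Pᵀ * P = P * M from by rw [Matrix.mul_assoc (P*M), hPtP, Matrix.mul_one],
      ← Matrix.mulVec_mulVec, hMs', hPs]
  exact conj P X M hP hXeq hM hdet hMe

private lemma Dsq : D * D = (1 : Matrix (Fin 3) (Fin 3) ℝ) := by
  ext i j
  fin_cases i <;> fin_cases j <;>
    simp [D, Matrix.mul_apply, Fin.sum_univ_three, Matrix.one_apply, Fin.ext_iff,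
      Matrix.vecHead, Matrix.vecTail]

private lemma DT : Dᵀ = D := by
  ext i j
  fin_cases i <;> fin_cases j <;>
    simp [D, Matrix.transpose_apply, Matrix.vecHead, Matrix.vecTail]

private lemma Xprops (nv : Fin 3 → ℝ) (hnn : nv ⬝ᵥ nv = 1)
    (X : Matrix (Fin 3) (Fin 3) ℝ) (hXn : X.mulVec nv = nv)
    (hXperp : ∀ v : Fin 3 → ℝ, nv ⬝ᵥ v = 0 → X.mulVec v = -v)
    (s0 : Fin 3 → ℝ) (hs0 : s0 ≠ 0) (hs0n : s0 ⬝ᵥ nv = 0) :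
    X * X = 1 ∧ Xᵀ = X := by
  obtain ⟨P, c, hP, hXeq, hPn, hPs, _⟩ := setup nv s0 hnn hs0 hs0n X hXn hXperp
  have hPtP : Pᵀ * P = 1 := mul_eq_one_comm.mp hP
  constructor
  · rw [hXeq, collapse P hP, Dsq, Matrix.mul_one, hPtP]
  · rw [hXeq]
    simp only [Matrix.transpose_mul, Matrix.transpose_transpose, DT, Matrix.mul_assoc]

private lemma XRcomm (nv : Fin 3 → ℝ) (hnn : nv ⬝ᵥ nv = 1)
    (X R : Matrix (Fin 3) (Fin 3) ℝ) (hXn : X.mulVec nv = nv)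
    (hXperp : ∀ v : Fin 3 → ℝ, nv ⬝ᵥ v = 0 → X.mulVec v = -v)
    (hR : Rᵀ * R = 1) (hRn : R.mulVec nv = nv)
    (s0 : Fin 3 → ℝ) (hs0 : s0 ≠ 0) (hs0n : s0 ⬝ᵥ nv = 0) :
    X * R = R * X := by
  obtain ⟨P, c, hP, hXeq, hPn, hPs, _⟩ := setup nv s0 hnn hs0 hs0n X hXn hXperp
  have hPtP : Pᵀ * P = 1 := mul_eq_one_comm.mp hP
  set R' := P * R * Pᵀ with hR'def
  have hRtn : Rᵀ.mulVec nv = nv := by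
    conv_lhs => rw [← hRn]
    rw [Matrix.mulVec_mulVec, hR, Matrix.one_mulVec]
  have hcol : R'.mulVec ![(0:ℝ),1,0] = ![(0:ℝ),1,0] := by
    rw [← hPn, Matrix.mulVec_mulVec,
      show P * R * Pᵀ * P = P * R from by rw [Matrix.mul_assoc (P*R), hPtP, Matrix.mul_one],
      ← Matrix.mulVec_mulVec, hRn]
  have hT : R'ᵀ = P * Rᵀ * Pᵀ := by
    rw [hR'def]
    simp only [Matrix.transpose_mul, Matrix.transpose_transpose, Matrix.mul_assoc]
  have hrowm : R'ᵀ.mulVec ![(0:ℝ),1,0] = ![(0:ℝ),1,0] := by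
    rw [hT, ← hPn, Matrix.mulVec_mulVec,
      show P * Rᵀ * Pᵀ * P = P * Rᵀ from by rw [Matrix.mul_assoc (P*Rᵀ), hPtP, Matrix.mul_one],
      ← Matrix.mulVec_mulVec, hRtn]
  have z01 : R' 0 1 = 0 := by
    have := congrFun hcol 0
    simpa [Matrix.mulVec, dotProduct, Fin.sum_univ_three] using this
  have z21 : R' 2 1 = 0 := by
    have := congrFun hcol 2
    simpa [Matrix.mulVec, dotProduct, Fin.sum_univ_three] using this
  have z10 : R' 1 0 = 0 := by
    have := congrFun hrowm 0
    simpa [Matrix.mulVec, dotProduct, Fin.sum_univ_three, Matrix.transpose_apply] using this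
  have z12 : R' 1 2 = 0 := by
    have := congrFun hrowm 2
    simpa [Matrix.mulVec, dotProduct, Fin.sum_univ_three, Matrix.transpose_apply] using this
  have hDR : D * R' = R' * D := by
    ext i j
    fin_cases i <;> fin_cases j <;>
      simp [D, Matrix.mul_apply, Fin.sum_univ_three, z01, z21, z10, z12,
        Matrix.vecHead, Matrix.vecTail]
  have hReq : R = Pᵀ * R' * P := by
    rw [hR'def]
    calc R = (Pᵀ * P) * R * (Pᵀ * P) := by rw [hPtP, Matrix.one_mul, Matrix.mul_one]
      _ = Pᵀ * (P * R * Pᵀ) * P := by simp only [Matrix.mul_assoc]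
  rw [hXeq, hReq, collapse P hP, collapse P hP, hDR]

end RotRev

open Matrix RotRev in
/-- Three rotations whose axes lie in a common plane orthogonal to `n`, composing to a
rotation `R` about the axis `n`, satisfy the reversal identity `C·B·A = R⁻¹`. -/
theorem rotation_reversal
    (n : EuclideanSpace ℝ (Fin 3)) (hn : ‖n‖ = 1)
    (X A B C R : Matrix (Fin 3) (Fin 3) ℝ)
    (hX : IsSO3 X) (hXn : matVec X n = n)
    (hXperp : ∀ v : EuclideanSpace ℝ (Fin 3), ⟪n, v⟫ = 0 → matVec X v = -v)
    (hA : IsSO3 A) (hB : IsSO3 B) (hC : IsSO3 C) (hR : IsSO3 R)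
    (hAfix : ∃ s : EuclideanSpace ℝ (Fin 3), s ≠ 0 ∧ ⟪s, n⟫ = 0 ∧ matVec A s = s)
    (hBfix : ∃ s : EuclideanSpace ℝ (Fin 3), s ≠ 0 ∧ ⟪s, n⟫ = 0 ∧ matVec B s = s)
    (hCfix : ∃ s : EuclideanSpace ℝ (Fin 3), s ≠ 0 ∧ ⟪s, n⟫ = 0 ∧ matVec C s = s)
    (hRn : matVec R n = n)
    (h : A * B * C = R) :
    C * B * A = R⁻¹ := by
  classical
  obtain ⟨sa, hsa0, hsan, hsafix⟩ := hAfix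
  obtain ⟨sb, hsb0, hsbn, hsbfix⟩ := hBfix
  obtain ⟨sc, hsc0, hscn, hscfix⟩ := hCfix
  obtain ⟨nv, hnveq⟩ : ∃ nv : Fin 3 → ℝ, nv = (n : Fin 3 → ℝ) := ⟨_, rfl⟩
  have hnn : nv ⬝ᵥ nv = 1 := by
    have h1 : ⟪n, n⟫ = 1 := by
      rw [real_inner_self_eq_norm_mul_norm, hn]; norm_num
    rw [hnveq, ← inner_eq_dot]; exact h1
  have hXn' : X.mulVec nv = nv := by
    rw [hnveq]; simpa [matVec, Matrix.toEuclideanLin_apply] using congrArg WithLp.ofLp hXn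
  have hXperp' : ∀ v : Fin 3 → ℝ, nv ⬝ᵥ v = 0 → X.mulVec v = -v := by
    intro v hv
    rw [hnveq] at hv
    have := hXperp (WithLp.toLp 2 v) (by rw [inner_eq_dot]; exact hv)
    simpa [matVec, Matrix.toEuclideanLin_apply] using congrArg WithLp.ofLp this
  have hsan' : (sa : Fin 3 → ℝ) ⬝ᵥ nv = 0 := by rw [hnveq, ← inner_eq_dot]; exact hsan
  have hsbn' : (sb : Fin 3 → ℝ) ⬝ᵥ nv = 0 := by rw [hnveq, ← inner_eq_dot]; exact hsbn
  have hscn' : (sc : Fin 3 → ℝ) ⬝ᵥ nv = 0 := by rw [hnveq, ← inner_eq_dot]; exact hscn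
  have hXA : A * X * A = X := MXM nv hnn X A hXn' hXperp' hA.1 hA.2 sa ((WithLp.ofLp_eq_zero 2).ne.2 hsa0) hsan'
      (by simpa [matVec, Matrix.toEuclideanLin_apply] using congrArg WithLp.ofLp hsafix)
  have hXB : B * X * B = X := MXM nv hnn X B hXn' hXperp' hB.1 hB.2 sb ((WithLp.ofLp_eq_zero 2).ne.2 hsb0) hsbn'
      (by simpa [matVec, Matrix.toEuclideanLin_apply] using congrArg WithLp.ofLp hsbfix)
  have hXC : C * X * C = X := MXM nv hnn X C hXn' hXperp' hC.1 hC.2 sc ((WithLp.ofLp_eq_zero 2).ne.2 hsc0) hscn'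
      (by simpa [matVec, Matrix.toEuclideanLin_apply] using congrArg WithLp.ofLp hscfix)
  obtain ⟨hXX, hXT⟩ := Xprops nv hnn X hXn' hXperp' sa ((WithLp.ofLp_eq_zero 2).ne.2 hsa0) hsan'
  have hRn' : R.mulVec nv = nv := by
    rw [hnveq]; simpa [matVec, Matrix.toEuclideanLin_apply] using congrArg WithLp.ofLp hRn
  have hXR : X * R = R * X := XRcomm nv hnn X R hXn' hXperp' hR.1 hRn' sa ((WithLp.ofLp_eq_zero 2).ne.2 hsa0) hsan'
  have rep : ∀ M : Matrix (Fin 3) (Fin 3) ℝ, Mᵀ * M = 1 → M * X * M = X → M = X * Mᵀ * X := by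
    intro M hMo hMX
    simp only [Matrix.mul_assoc] at hMX
    have h1 : X * M = Mᵀ * X := by
      calc X * M = (Mᵀ * M) * (X * M) := by rw [hMo, Matrix.one_mul]
        _ = Mᵀ * (M * (X * M)) := by simp only [Matrix.mul_assoc]
        _ = Mᵀ * X := by rw [hMX]
    calc M = (X * X) * M := by rw [hXX, Matrix.one_mul]
      _ = X * (X * M) := by simp only [Matrix.mul_assoc]
      _ = X * (Mᵀ * X) := by rw [h1]
      _ = X * Mᵀ * X := by simp only [Matrix.mul_assoc]
  have hRT : X * Rᵀ = Rᵀ * X := by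
    have h2 := congrArg Matrix.transpose hXR
    rw [Matrix.transpose_mul, Matrix.transpose_mul, hXT] at h2
    exact h2.symm
  calc C * B * A = (X * Cᵀ * X) * (X * Bᵀ * X) * (X * Aᵀ * X) := by
        rw [← rep A hA.1 hXA, ← rep B hB.1 hXB, ← rep C hC.1 hXC]
    _ = X * (Cᵀ * Bᵀ * Aᵀ) * X := by
        rw [sandwich X Cᵀ Bᵀ hXX, sandwich X (Cᵀ * Bᵀ) Aᵀ hXX]
    _ = X * Rᵀ * X := by
        rw [show Cᵀ * Bᵀ * Aᵀ = (A * B * C)ᵀ from by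
          simp only [Matrix.transpose_mul, Matrix.mul_assoc], h]
    _ = Rᵀ := by rw [hRT, Matrix.mul_assoc, hXX, Matrix.mul_one]
    _ = R⁻¹ := (Matrix.inv_eq_left_inv hR.1).symm
end

section
/- Let n be a pure unit quaternion (real part 0 and norm 1). Let A, B, C be unit quaternions whose imaginary parts are each orthogonal to n (the inner product of im A and n is zero, and likewise for B and C), and let R be a unit quaternion whose imaginary part is a real scalar multiple of n. If A * B * C = R, then C * B * A = R⁻¹. -/
open scoped Quaternion RealInnerProductSpace

open Quaternion

lemma mul_self_of_pure_unit (n : ℍ[ℝ]) (hre : n.re = 0) (hn : ‖n‖ = 1) :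
    n * n = -1 := by
  have hs : star n = -n := by
    ext <;> simp [hre]
  have h1 : normSq n = 1 := by
    rw [Quaternion.normSq_eq_norm_mul_self, hn]; ring
  have h2 := Quaternion.self_mul_star n
  rw [hs, h1] at h2
  have h3 : n * n = -(n * -n) := by noncomm_ring
  rw [h3, h2]; simp

lemma anticomm_of_orth (v n : ℍ[ℝ]) (hv : v.re = 0) (hn : n.re = 0)
    (h : ⟪v, n⟫ = 0) : v * n + n * v = 0 := by
  have hsv : star v = -v := by ext <;> simp [hv]
  have hsn : star n = -n := by ext <;> simp [hn]
  have hstar : star (v * n) = n * v := by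
    rw [star_mul, hsv, hsn]; noncomm_ring
  have hre : (v * n).re = 0 := by
    have h2 : (v * star n).re = 0 := by rw [← Quaternion.inner_def]; exact h
    rw [hsn, mul_neg, re_neg, neg_eq_zero] at h2
    exact h2
  have h3 := Quaternion.self_add_star (v * n)
  rw [hstar, hre] at h3
  simpa using h3

/-- Lemma 1 of the paper in its SU(2) form: three unit quaternions whose rotation axes lie
in the plane orthogonal to the pure unit quaternion `n`, composing to a unit quaternion `R`
whose axis is along `n`, satisfy the reversal identity `C·B·A = R⁻¹`. -/
theorem quaternion_reversal
    (n A B C R : ℍ[ℝ])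
    (hn_re : n.re = 0) (hn : ‖n‖ = 1)
    (hA : ‖A‖ = 1) (hB : ‖B‖ = 1) (hC : ‖C‖ = 1) (hR : ‖R‖ = 1)
    (hAn : ⟪A.im, n⟫ = 0) (hBn : ⟪B.im, n⟫ = 0) (hCn : ⟪C.im, n⟫ = 0)
    (hRn : ∃ t : ℝ, R.im = t • n)
    (h : A * B * C = R) :
    C * B * A = R⁻¹ := by
  have hnn : n * n = -1 := mul_self_of_pure_unit n hn_re hn
  have key : ∀ q : ℍ[ℝ], ⟪q.im, n⟫ = 0 → -(n * q * n) = star q := by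
    intro q hq
    have hac := anticomm_of_orth q.im n (Quaternion.re_im q) hn_re hq
    have hq' : q = (q.re : ℍ[ℝ]) + q.im := (Quaternion.re_add_im q).symm
    have himn : n * q.im * n = q.im := by
      have h1 : n * q.im = -(q.im * n) := eq_neg_of_add_eq_zero_right hac
      rw [h1]
      have h2 : -(q.im * n) * n = -(q.im * (n * n)) := by noncomm_ring
      rw [h2, hnn]; noncomm_ring
    have hcomm : n * (q.re : ℍ[ℝ]) = (q.re : ℍ[ℝ]) * n :=
      (Quaternion.coe_commutes _ _).symm
    calc -(n * q * n) = -(n * (q.re : ℍ[ℝ]) * n) - n * q.im * n := by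
          conv_lhs => rw [hq']
          noncomm_ring
    _ = -((q.re : ℍ[ℝ]) * (n * n)) - n * q.im * n := by rw [hcomm, mul_assoc]
    _ = (q.re : ℍ[ℝ]) - q.im := by rw [hnn, himn]; noncomm_ring
    _ = star q := by ext <;> simp
  have hfixR : -(n * R * n) = R := by
    obtain ⟨t, ht⟩ := hRn
    have hR' : R = (R.re : ℍ[ℝ]) + (t : ℍ[ℝ]) * n := by
      rw [Quaternion.coe_mul_eq_smul, ← ht]
      exact (Quaternion.re_add_im R).symm
    have hc1 : n * (R.re : ℍ[ℝ]) = (R.re : ℍ[ℝ]) * n := (Quaternion.coe_commutes _ _).symm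
    have hc2 : n * (t : ℍ[ℝ]) = (t : ℍ[ℝ]) * n := (Quaternion.coe_commutes _ _).symm
    calc -(n * R * n)
        = -(n * (R.re : ℍ[ℝ]) * n) - n * (t : ℍ[ℝ]) * n * n := by
          conv_lhs => rw [hR']
          noncomm_ring
    _ = -((R.re : ℍ[ℝ]) * (n * n)) - (t : ℍ[ℝ]) * (n * (n * n)) := by
          rw [hc1, hc2]; noncomm_ring
    _ = (R.re : ℍ[ℝ]) + (t : ℍ[ℝ]) * n := by rw [hnn]; noncomm_ring
    _ = R := hR'.symm
  have hσ : -(n * (A * B * C) * n) = star A * star B * star C := by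
    have hA' := key A hAn
    have hB' := key B hBn
    have hC' := key C hCn
    calc -(n * (A * B * C) * n)
        = -(n * A * (-1 : ℍ[ℝ]) * B * (-1 : ℍ[ℝ]) * C * n) := by noncomm_ring
    _ = -(n * A * (n * n) * B * (n * n) * C * n) := by
          rw [show (-1 : ℍ[ℝ]) = n * n from hnn.symm]
    _ = (-(n * A * n)) * (-(n * B * n)) * (-(n * C * n)) := by noncomm_ring
    _ = star A * star B * star C := by rw [hA', hB', hC']
  rw [h, hfixR] at hσ
  have hstar : star (C * B * A) = R := by
    rw [star_mul, star_mul, ← mul_assoc]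
    exact hσ.symm
  have hCBA : C * B * A = star R := by
    have h4 := congrArg star hstar
    rwa [star_star] at h4
  have hRinv : R⁻¹ = star R := by
    have h1 : normSq R = 1 := by
      rw [Quaternion.normSq_eq_norm_mul_self, hR]; ring
    have h5 : star R * R = 1 := by
      rw [Quaternion.star_mul_self, h1]; simp
    exact inv_eq_of_mul_eq_one_left h5
  rw [hCBA, hRinv]
end

section
/- The set of families b : Fin 5 → Fin 5 → ℝ³ satisfying b_{aa} = 0 for all a, the antisymmetry condition b_{ab} = −b_{ba} for all a, b, and the closure condition ∑_{b} b_{ab} = 0 for every a, is a real linear subspace of (ℝ³)^{5×5} of dimension exactly 18. -/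
open Finset

local notation "E3" => EuclideanSpace ℝ (Fin 3)

def VG : Submodule ℝ (Fin 5 → Fin 5 → E3) where
  carrier := {b | (∀ a, b a a = 0) ∧ (∀ a c, b a c = - b c a) ∧ (∀ a, ∑ c, b a c = 0)}
  add_mem' := by
    rintro x y ⟨hx1, hx2, hx3⟩ ⟨hy1, hy2, hy3⟩
    refine ⟨fun a => by simp [hx1 a, hy1 a],
      fun a c => by simp only [Pi.add_apply, hx2 a c, hy2 a c]; abel,
      fun a => by simp [Finset.sum_add_distrib, hx3 a, hy3 a]⟩
  zero_mem' := by
    refine ⟨fun a => rfl, fun a c => by simp, fun a => by simp⟩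
  smul_mem' := by
    rintro r x ⟨h1, h2, h3⟩
    refine ⟨fun a => by simp [h1 a], fun a c => by simp [h2 a c],
      fun a => by simp [← Finset.smul_sum, h3 a]⟩

def idx : Fin 6 → Fin 5 × Fin 5 := ![(0,1),(0,2),(0,3),(1,2),(1,3),(2,3)]

noncomputable def Bmap (v : Fin 6 → E3) : Fin 5 → Fin 5 → E3 :=
  ![![0, v 0, v 1, v 2, -(v 0 + v 1 + v 2)],
    ![-v 0, 0, v 3, v 4, v 0 - v 3 - v 4],
    ![-v 1, -v 3, 0, v 5, v 1 + v 3 - v 5],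
    ![-v 2, -v 4, -v 5, 0, v 2 + v 4 + v 5],
    ![v 0 + v 1 + v 2, -(v 0) + v 3 + v 4, -(v 1) - v 3 + v 5, -(v 2) - v 4 - v 5, 0]]

def phi : VG →ₗ[ℝ] (Fin 6 → E3) where
  toFun b i := b.1 (idx i).1 (idx i).2
  map_add' := by intros; rfl
  map_smul' := by intros; rfl

set_option maxRecDepth 8000 in
/-- The set of vector geometries — families `b : Fin 5 → Fin 5 → ℝ³` with `b a a = 0`,
antisymmetry `b a c = - b c a`, and the closure condition `∑ c, b a c = 0` for every `a` —
is a real linear subspace of dimension exactly 18. -/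
theorem vector_geometry_dimension :
    ∃ S : Submodule ℝ (Fin 5 → Fin 5 → EuclideanSpace ℝ (Fin 3)),
      (∀ b : Fin 5 → Fin 5 → EuclideanSpace ℝ (Fin 3),
        b ∈ S ↔ ((∀ a, b a a = 0) ∧ (∀ a c, b a c = - b c a) ∧ (∀ a, ∑ c, b a c = 0))) ∧
      Module.finrank ℝ S = 18 := by
  refine ⟨VG, fun b => Iff.rfl, ?_⟩
  have hinj : Function.Injective phi := by
    rw [injective_iff_map_eq_zero]
    rintro ⟨b, h1, h2, h3⟩ hb
    have e : ∀ i : Fin 6, b (idx i).1 (idx i).2 = 0 := fun i => congrFun hb i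
    have e01 : b 0 1 = 0 := e 0
    have e02 : b 0 2 = 0 := e 1
    have e03 : b 0 3 = 0 := e 2
    have e12 : b 1 2 = 0 := e 3
    have e13 : b 1 3 = 0 := e 4
    have e23 : b 2 3 = 0 := e 5
    have e10 : b 1 0 = 0 := by rw [h2]; simp [e01]
    have e20 : b 2 0 = 0 := by rw [h2]; simp [e02]
    have e30 : b 3 0 = 0 := by rw [h2]; simp [e03]
    have e21 : b 2 1 = 0 := by rw [h2]; simp [e12]
    have e31 : b 3 1 = 0 := by rw [h2]; simp [e13]
    have e32 : b 3 2 = 0 := by rw [h2]; simp [e23]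
    have e04 : b 0 4 = 0 := by
      have h := h3 0; rw [Fin.sum_univ_five, h1, e01, e02, e03] at h; simpa using h
    have e14 : b 1 4 = 0 := by
      have h := h3 1; rw [Fin.sum_univ_five, h1, e10, e12, e13] at h; simpa using h
    have e24 : b 2 4 = 0 := by
      have h := h3 2; rw [Fin.sum_univ_five, h1, e20, e21, e23] at h; simpa using h
    have e34 : b 3 4 = 0 := by
      have h := h3 3; rw [Fin.sum_univ_five, h1, e30, e31, e32] at h; simpa using h
    have e40 : b 4 0 = 0 := by rw [h2]; simp [e04]
    have e41 : b 4 1 = 0 := by rw [h2]; simp [e14]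
    have e42 : b 4 2 = 0 := by rw [h2]; simp [e24]
    have e43 : b 4 3 = 0 := by rw [h2]; simp [e34]
    apply Subtype.ext
    funext a c
    fin_cases a <;> fin_cases c <;> first
      | exact h1 _
      | assumption
  have hsurj : Function.Surjective phi := by
    intro v
    have hmem : Bmap v ∈ VG := by
      refine ⟨fun a => by fin_cases a <;> simp [Bmap],
        fun a c => by fin_cases a <;> fin_cases c <;> (simp [Bmap]; try abel),
        fun a => by fin_cases a <;> (rw [Fin.sum_univ_five]; simp [Bmap]; try abel)⟩
    refine ⟨⟨Bmap v, hmem⟩, ?_⟩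
    funext i
    fin_cases i <;> rfl
  have e := LinearEquiv.ofBijective phi ⟨hinj, hsurj⟩
  rw [e.finrank_eq]
  simp [Module.finrank_pi_fintype]
end

section
/- Let X_{ab}, X_{bc}, X_{ca} ∈ SO(3) with X_{ab} X_{bc} X_{ca} = 1, and set X_{ba} = (X_{ab})⁻¹, X_{cb} = (X_{bc})⁻¹, X_{ac} = (X_{ca})⁻¹. Let g_{ab}, g_{bc}, g_{ca} ∈ SO(3), with g_{ba} = (g_{ab})⁻¹, g_{cb} = (g_{bc})⁻¹, g_{ac} = (g_{ca})⁻¹, and let n_{ab}, n_{ba}, n_{bc}, n_{cb}, n_{ca}, n_{ac} be unit vectors in ℝ³ satisfying X_{ab} n_{ba} = −n_{ab}, X_{bc} n_{cb} = −n_{bc}, X_{ca} n_{ac} = −n_{ca}, and g_{ba} n_{ab} = −n_{ba}, g_{cb} n_{bc} = −n_{cb}, g_{ac} n_{ca} = −n_{ac}. Suppose there exists a nonzero vector e ∈ ℝ³ such that (g_{ab} g_{bc} g_{ca}) e = e and ⟨n_{ab}, e⟩ = 0, ⟨n_{bc}, g_{ba} e⟩ = 0, ⟨n_{ca}, g_{cb}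 g_{ba} e⟩ = 0. Then (g_{ab} X_{ba} g_{ab}) · (g_{bc} X_{cb} g_{bc}) · (g_{ca} X_{ac} g_{ca}) = 1. -/
open scoped RealInnerProductSpace

namespace InvolutionCocycleAux

open Matrix

/-- Rotation by π about the axis spanned by the unit vector `p`. -/
noncomputable def rot2 (p : Fin 3 → ℝ) : Matrix (Fin 3) (Fin 3) ℝ :=
  (2:ℝ) • vecMulVec p p - 1

lemma rot2_mulVec (p v : Fin 3 → ℝ) :
    (rot2 p).mulVec v = (2 * (p ⬝ᵥ v)) • p - v := by
  funext i
  simp [rot2, vecMulVec, mulVec, dotProduct, Fin.sum_univ_three, Matrix.sub_apply, one_apply]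
  fin_cases i <;> simp <;> ring

lemma rot2_transpose (p : Fin 3 → ℝ) : (rot2 p)ᵀ = rot2 p := by
  ext i j
  simp [rot2, vecMulVec_apply, transpose_apply, one_apply]
  by_cases h : i = j
  · simp [h, mul_comm]
  · simp [h, Ne.symm h, mul_comm]

lemma dot_mulVec' (x : Fin 3 → ℝ) (M : Matrix (Fin 3) (Fin 3) ℝ) (y : Fin 3 → ℝ) :
    x ⬝ᵥ M.mulVec y = (Mᵀ.mulVec x) ⬝ᵥ y := by rw [dotProduct_mulVec, mulVec_transpose]

lemma mulVec_dot (M : Matrix (Fin 3) (Fin 3) ℝ) (x y : Fin 3 → ℝ) :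
    (M.mulVec x) ⬝ᵥ y = x ⬝ᵥ (Mᵀ.mulVec y) := by
  rw [dotProduct_comm, dot_mulVec', dotProduct_comm]

lemma mulVec_cancel {M : Matrix (Fin 3) (Fin 3) ℝ} (h : Mᵀ * M = 1) (v : Fin 3 → ℝ) :
    Mᵀ.mulVec (M.mulVec v) = v := by rw [mulVec_mulVec, h, one_mulVec]

lemma mulVec_cancel' {M : Matrix (Fin 3) (Fin 3) ℝ} (h : Mᵀ * M = 1) (v : Fin 3 → ℝ) :
    M.mulVec (Mᵀ.mulVec v) = v := by rw [mulVec_mulVec, mul_eq_one_comm.mp h, one_mulVec]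

lemma lcancel {M N : Matrix (Fin 3) (Fin 3) ℝ} (h : M * N = 1) (X : Matrix (Fin 3) (Fin 3) ℝ) :
    M * (N * X) = X := by rw [← mul_assoc, h, one_mul]

lemma matrix_ext_mulVec {A B : Matrix (Fin 3) (Fin 3) ℝ}
    (h : ∀ v, A.mulVec v = B.mulVec v) : A = B := by
  ext i j
  have := congrFun (h (Pi.single j 1)) i
  simpa [mulVec_single] using this

lemma crossEquiv (M : Matrix (Fin 3) (Fin 3) ℝ) (u v : Fin 3 → ℝ) :
    Mᵀ.mulVec (crossProduct (M.mulVec u) (M.mulVec v)) = M.det • crossProduct u v := by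
  funext i
  fin_cases i <;>
  · simp [cross_apply, mulVec, dotProduct, Fin.sum_univ_three, det_fin_three, transpose_apply]
    ring

lemma rot2_sq {p : Fin 3 → ℝ} (hp : p ⬝ᵥ p = 1) : rot2 p * rot2 p = 1 := by
  apply matrix_ext_mulVec
  intro v
  rw [one_mulVec, ← mulVec_mulVec, rot2_mulVec, rot2_mulVec]
  simp only [dotProduct_sub, dotProduct_smul, hp, smul_eq_mul, mul_one]
  module

lemma rot2_comm {p : Fin 3 → ℝ} {D : Matrix (Fin 3) (Fin 3) ℝ}
    (hDp : D.mulVec p = p) (hDtp : Dᵀ.mulVec p = p) :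
    D * rot2 p = rot2 p * D := by
  apply matrix_ext_mulVec
  intro v
  rw [← mulVec_mulVec, ← mulVec_mulVec, rot2_mulVec, rot2_mulVec]
  rw [Matrix.mulVec_sub, Matrix.mulVec_smul, hDp]
  congr 2
  rw [dot_mulVec', hDtp]

lemma so3_mul {A B : Matrix (Fin 3) (Fin 3) ℝ} (hA : IsSO3 A) (hB : IsSO3 B) :
    IsSO3 (A * B) := by
  constructor
  · rw [transpose_mul, mul_assoc, lcancel hA.1 B, hB.1]
  · rw [det_mul, hA.2, hB.2, mul_one]

lemma so3_transpose {A : Matrix (Fin 3) (Fin 3) ℝ} (hA : IsSO3 A) : IsSO3 Aᵀ := by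
  constructor
  · rw [transpose_transpose]; exact mul_eq_one_comm.mp hA.1
  · rw [det_transpose]; exact hA.2

/-- Key lemma: conjugating a rotation `R` that fixes a unit vector `m` by the π-rotation
about a unit axis `p` orthogonal to `m` gives the inverse rotation `Rᵀ`. -/
lemma lemL {R : Matrix (Fin 3) (Fin 3) ℝ} (hR : IsSO3 R) {m p : Fin 3 → ℝ}
    (hm : m ⬝ᵥ m = 1) (hp : p ⬝ᵥ p = 1) (hmp : m ⬝ᵥ p = 0)
    (hRm : R.mulVec m = m) :
    rot2 p * R * rot2 p = Rᵀ := by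
  obtain ⟨hR1, hR2⟩ := hR
  set q := crossProduct m p with hqdef
  have hm' : m 0 * m 0 + m 1 * m 1 + m 2 * m 2 = 1 := by
    simpa [dotProduct, Fin.sum_univ_three] using hm
  have hp' : p 0 * p 0 + p 1 * p 1 + p 2 * p 2 = 1 := by
    simpa [dotProduct, Fin.sum_univ_three] using hp
  have hmp' : m 0 * p 0 + m 1 * p 1 + m 2 * p 2 = 0 := by
    simpa [dotProduct, Fin.sum_univ_three] using hmp
  have hqm : q ⬝ᵥ m = 0 := by
    simp [hqdef, cross_apply, dotProduct, Fin.sum_univ_three]; ring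
  have hqp : q ⬝ᵥ p = 0 := by
    simp [hqdef, cross_apply, dotProduct, Fin.sum_univ_three]; ring
  have hmq : m ⬝ᵥ q = 0 := by rw [dotProduct_comm]; exact hqm
  have hpq : p ⬝ᵥ q = 0 := by rw [dotProduct_comm]; exact hqp
  have hpm : p ⬝ᵥ m = 0 := by rw [dotProduct_comm]; exact hmp
  have hqq : q ⬝ᵥ q = 1 := by
    simp only [hqdef, cross_apply, dotProduct, Fin.sum_univ_three]
    simp
    linear_combination (p 0 * p 0 + p 1 * p 1 + p 2 * p 2) * hm' + hp'
      - (m 0 * p 0 + m 1 * p 1 + m 2 * p 2) * hmp'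
  have hqm2 : q 0 * m 0 + q 1 * m 1 + q 2 * m 2 = 0 := by
    simpa [dotProduct, Fin.sum_univ_three] using hqm
  have hqp2 : q 0 * p 0 + q 1 * p 1 + q 2 * p 2 = 0 := by
    simpa [dotProduct, Fin.sum_univ_three] using hqp
  have hqq2 : q 0 * q 0 + q 1 * q 1 + q 2 * q 2 = 1 := by
    simpa [dotProduct, Fin.sum_univ_three] using hqq
  have hRtm : Rᵀ.mulVec m = m := by
    conv_lhs => rw [← hRm]
    exact mulVec_cancel hR1 m
  have hRq : R.mulVec q = crossProduct m (R.mulVec p) := by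
    have h0 := crossEquiv R m p
    rw [hR2, one_smul, hRm] at h0
    have h1 : crossProduct m p = Rᵀ.mulVec (crossProduct m (R.mulVec p)) := h0.symm
    rw [hqdef, h1, mulVec_cancel' hR1]
  have hc1 : m ⬝ᵥ R.mulVec p = 0 := by rw [dot_mulVec', hRtm, hmp]
  have hc2 : m ⬝ᵥ R.mulVec q = 0 := by rw [dot_mulVec', hRtm, hmq]
  have hkey : q ⬝ᵥ R.mulVec p = - (p ⬝ᵥ R.mulVec q) := by
    rw [hRq]
    have h := (fun z : Fin 3 → ℝ => by
      simp [cross_apply, dotProduct, Fin.sum_univ_three]; ring :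
      ∀ z : Fin 3 → ℝ, (crossProduct m p) ⬝ᵥ z + p ⬝ᵥ (crossProduct m z) = 0) (R.mulVec p)
    rw [hqdef]; linarith
  have hFm : (rot2 p).mulVec m = -m := by
    rw [rot2_mulVec, dotProduct_comm, hmp]; simp
  have hFp : (rot2 p).mulVec p = p := by
    rw [rot2_mulVec, hp]; module
  have hFq : (rot2 p).mulVec q = -q := by
    rw [rot2_mulVec, dotProduct_comm, hqp]; simp
  have hFdot : ∀ x z : Fin 3 → ℝ, x ⬝ᵥ (rot2 p).mulVec z = ((rot2 p).mulVec x) ⬝ᵥ z := by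
    intro x z; rw [dot_mulVec', rot2_transpose]
  have hdotT : ∀ x y : Fin 3 → ℝ, x ⬝ᵥ Rᵀ.mulVec y = y ⬝ᵥ R.mulVec x := by
    intro x y; rw [dot_mulVec', transpose_transpose, dotProduct_comm]
  set W : Matrix (Fin 3) (Fin 3) ℝ := Matrix.of ![m, p, q] with hWdef
  have hWWt : W * Wᵀ = 1 := by
    ext i j
    fin_cases i <;> fin_cases j <;>
      simp [hWdef, mul_apply, transpose_apply, dotProduct, Fin.sum_univ_three, one_apply,
        Matrix.cons_val', Matrix.cons_val_zero, Matrix.cons_val_one, Matrix.head_cons,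
        Matrix.head_fin_const, Matrix.empty_val', Matrix.cons_val_fin_one, Matrix.vecHead,
        Matrix.vecTail] <;>
      first
        | linear_combination hm'
        | linear_combination hp'
        | linear_combination hmp'
        | linear_combination hqm2
        | linear_combination hqp2
        | linear_combination hqq2
  have hWtW : Wᵀ * W = 1 := mul_eq_one_comm.mp hWWt
  have hent : ∀ (M : Matrix (Fin 3) (Fin 3) ℝ) (i j : Fin 3),
      (W * M * Wᵀ) i j = (![m, p, q] i) ⬝ᵥ (M.mulVec (![m, p, q] j)) := by
    intro M i j
    fin_cases i <;> fin_cases j <;>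
    · simp [hWdef, mul_apply, transpose_apply, dotProduct, mulVec, vecMul, Fin.sum_univ_three,
        Matrix.cons_val', Matrix.cons_val_zero, Matrix.cons_val_one, Matrix.head_cons,
        Matrix.head_fin_const, Matrix.empty_val', Matrix.cons_val_fin_one, Matrix.vecHead,
        Matrix.vecTail]
      ring
  have hsplit3 : ∀ v, (rot2 p * R * rot2 p).mulVec v
      = (rot2 p).mulVec (R.mulVec ((rot2 p).mulVec v)) := by
    intro v; rw [← mulVec_mulVec, ← mulVec_mulVec]
  have hsand : W * (rot2 p * R * rot2 p) * Wᵀ = W * Rᵀ * Wᵀ := by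
    ext i j
    rw [hent, hent]
    fin_cases i <;> fin_cases j <;>
      simp only [Fin.zero_eta, Fin.mk_one, Fin.reduceFinMk, Fin.isValue,
        Matrix.cons_val_zero, Matrix.cons_val_one, Matrix.head_cons,
        Matrix.cons_val_two, Matrix.tail_cons, hsplit3, hFm, hFp, hFq,
        Matrix.mulVec_neg, hRm, hFdot, hdotT, neg_dotProduct, dotProduct_neg, neg_neg,
        hc1, hc2, hqm, hpm, hmq, hpq, hkey, neg_zero]
  calc rot2 p * R * rot2 p
      = (Wᵀ * W) * (rot2 p * R * rot2 p) * (Wᵀ * W) := by rw [hWtW, one_mul, mul_one]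
    _ = Wᵀ * (W * (rot2 p * R * rot2 p) * Wᵀ) * W := by simp only [mul_assoc]
    _ = Wᵀ * (W * Rᵀ * Wᵀ) * W := by rw [hsand]
    _ = (Wᵀ * W) * Rᵀ * (Wᵀ * W) := by simp only [mul_assoc]
    _ = Rᵀ := by rw [hWtW, one_mul, mul_one]

end InvolutionCocycleAux

open InvolutionCocycleAux Matrix in
/-- The key cocycle condition `X'_ab X'_bc X'_ca = 1` for the involuted solution
`X'_xy = g_xy X_yx g_xy`, given an edge vector `e` of the hinge fixed by the holonomy
`g_ab g_bc g_ca` and orthogonal (in the appropriate frames) to the three triangle normals. -/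
theorem involution_cocycle
    (Xab Xbc Xca Xba Xcb Xac : Matrix (Fin 3) (Fin 3) ℝ)
    (hXab : IsSO3 Xab) (hXbc : IsSO3 Xbc) (hXca : IsSO3 Xca)
    (hXcoc : Xab * Xbc * Xca = 1)
    (hXba : Xba = Xab⁻¹) (hXcb : Xcb = Xbc⁻¹) (hXac : Xac = Xca⁻¹)
    (gab gbc gca gba gcb gac : Matrix (Fin 3) (Fin 3) ℝ)
    (hgab : IsSO3 gab) (hgbc : IsSO3 gbc) (hgca : IsSO3 gca)
    (hgba : gba = gab⁻¹) (hgcb : gcb = gbc⁻¹) (hgac : gac = gca⁻¹)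
    (nab nba nbc ncb nca nac : EuclideanSpace ℝ (Fin 3))
    (hnab : ‖nab‖ = 1) (hnba : ‖nba‖ = 1) (hnbc : ‖nbc‖ = 1)
    (hncb : ‖ncb‖ = 1) (hnca : ‖nca‖ = 1) (hnac : ‖nac‖ = 1)
    (h1 : matVec Xab nba = -nab) (h2 : matVec Xbc ncb = -nbc) (h3 : matVec Xca nac = -nca)
    (h4 : matVec gba nab = -nba) (h5 : matVec gcb nbc = -ncb) (h6 : matVec gac nca = -nac)
    (e : EuclideanSpace ℝ (Fin 3)) (he : e ≠ 0)
    (hefix : matVec (gab * gbc * gca) e = e)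
    (heab : ⟪nab, e⟫ = 0)
    (hebc : ⟪nbc, matVec gba e⟫ = 0)
    (heca : ⟪nca, matVec (gcb * gba) e⟫ = 0) :
    (gab * Xba * gab) * (gbc * Xcb * gbc) * (gca * Xac * gca) = 1 := by
  -- orthogonality relations
  have oA : Xabᵀ * Xab = 1 := hXab.1
  have oB : Xbcᵀ * Xbc = 1 := hXbc.1
  have oC : Xcaᵀ * Xca = 1 := hXca.1
  have og1 : gabᵀ * gab = 1 := hgab.1
  have og2 : gbcᵀ * gbc = 1 := hgbc.1
  have og3 : gcaᵀ * gca = 1 := hgca.1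
  have og1' : gab * gabᵀ = 1 := mul_eq_one_comm.mp og1
  have og2' : gbc * gbcᵀ = 1 := mul_eq_one_comm.mp og2
  have og3' : gca * gcaᵀ = 1 := mul_eq_one_comm.mp og3
  -- inverses are transposes
  have hXba' : Xba = Xabᵀ := by rw [hXba, Matrix.inv_eq_left_inv oA]
  have hXcb' : Xcb = Xbcᵀ := by rw [hXcb, Matrix.inv_eq_left_inv oB]
  have hXac' : Xac = Xcaᵀ := by rw [hXac, Matrix.inv_eq_left_inv oC]
  have hgba' : gba = gabᵀ := by rw [hgba, Matrix.inv_eq_left_inv og1]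
  have hgcb' : gcb = gbcᵀ := by rw [hgcb, Matrix.inv_eq_left_inv og2]
  have hgac' : gac = gcaᵀ := by rw [hgac, Matrix.inv_eq_left_inv og3]
  rw [hgba'] at h4 hebc heca
  rw [hgcb'] at h5 heca
  rw [hgac'] at h6
  rw [hXba', hXcb', hXac']
  -- plain (non-EuclideanSpace) versions of the vector hypotheses
  have h1' : Xab.mulVec nba = -(nab : Fin 3 → ℝ) := congrArg WithLp.ofLp h1
  have h2' : Xbc.mulVec ncb = -(nbc : Fin 3 → ℝ) := congrArg WithLp.ofLp h2
  have h3' : Xca.mulVec nac = -(nca : Fin 3 → ℝ) := congrArg WithLp.ofLp h3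
  have h4' : gabᵀ.mulVec nab = -(nba : Fin 3 → ℝ) := congrArg WithLp.ofLp h4
  have h5' : gbcᵀ.mulVec nbc = -(ncb : Fin 3 → ℝ) := congrArg WithLp.ofLp h5
  have h6' : gcaᵀ.mulVec nca = -(nac : Fin 3 → ℝ) := congrArg WithLp.ofLp h6
  have hDe : (gab * gbc * gca).mulVec e = (e : Fin 3 → ℝ) := congrArg WithLp.ofLp hefix
  have inner_eq : ∀ x y : EuclideanSpace ℝ (Fin 3), ⟪x, y⟫ = (x : Fin 3 → ℝ) ⬝ᵥ y := by
    intro x y; simp [PiLp.inner_apply, dotProduct]; exact Finset.sum_congr rfl fun _ _ => mul_comm _ _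
  have heab' : (nab : Fin 3 → ℝ) ⬝ᵥ e = 0 := by rw [← inner_eq]; exact heab
  have hebc' : (nbc : Fin 3 → ℝ) ⬝ᵥ (gabᵀ.mulVec e) = 0 := by
    rw [show ((gabᵀ.mulVec e : Fin 3 → ℝ)) = (matVec gabᵀ e : Fin 3 → ℝ) from rfl, ← inner_eq]
    exact hebc
  have heca' : (nca : Fin 3 → ℝ) ⬝ᵥ ((gbcᵀ * gabᵀ).mulVec e) = 0 := by
    rw [show (((gbcᵀ * gabᵀ).mulVec e : Fin 3 → ℝ)) = (matVec (gbcᵀ * gabᵀ) e : Fin 3 → ℝ)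
      from rfl, ← inner_eq]
    exact heca
  have dot_one : ∀ x : EuclideanSpace ℝ (Fin 3), ‖x‖ = 1 → (x : Fin 3 → ℝ) ⬝ᵥ x = 1 := by
    intro x hx
    have h1 := real_inner_self_eq_norm_sq x
    rw [hx, inner_eq] at h1
    simpa using h1
  have hnab' := dot_one nab hnab
  have hnbc' := dot_one nbc hnbc
  have hnac' := dot_one nac hnac
  -- derived vector relations
  have ha : gab.mulVec nba = -(nab : Fin 3 → ℝ) := by
    have h : gab.mulVec (gabᵀ.mulVec nab) = gab.mulVec (-(nba : Fin 3 → ℝ)) := by rw [h4']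
    rw [mulVec_cancel' og1, Matrix.mulVec_neg] at h
    rw [h, neg_neg]
  have hb : gbc.mulVec ncb = -(nbc : Fin 3 → ℝ) := by
    have h : gbc.mulVec (gbcᵀ.mulVec nbc) = gbc.mulVec (-(ncb : Fin 3 → ℝ)) := by rw [h5']
    rw [mulVec_cancel' og2, Matrix.mulVec_neg] at h
    rw [h, neg_neg]
  have hc : gca.mulVec nac = -(nca : Fin 3 → ℝ) := by
    have h : gca.mulVec (gcaᵀ.mulVec nca) = gca.mulVec (-(nac : Fin 3 → ℝ)) := by rw [h6']
    rw [mulVec_cancel' og3, Matrix.mulVec_neg] at h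
    rw [h, neg_neg]
  have hAt : Xabᵀ.mulVec nab = -(nba : Fin 3 → ℝ) := by
    have h : Xabᵀ.mulVec (Xab.mulVec nba) = Xabᵀ.mulVec (-(nab : Fin 3 → ℝ)) := by rw [h1']
    rw [mulVec_cancel oA, Matrix.mulVec_neg] at h
    rw [h, neg_neg]
  have hBt : Xbcᵀ.mulVec nbc = -(ncb : Fin 3 → ℝ) := by
    have h : Xbcᵀ.mulVec (Xbc.mulVec ncb) = Xbcᵀ.mulVec (-(nbc : Fin 3 → ℝ)) := by rw [h2']
    rw [mulVec_cancel oB, Matrix.mulVec_neg] at h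
    rw [h, neg_neg]
  have hCt : Xcaᵀ.mulVec nca = -(nac : Fin 3 → ℝ) := by
    have h : Xcaᵀ.mulVec (Xca.mulVec nac) = Xcaᵀ.mulVec (-(nca : Fin 3 → ℝ)) := by rw [h3']
    rw [mulVec_cancel oC, Matrix.mulVec_neg] at h
    rw [h, neg_neg]
  -- the holonomy
  have hDso : IsSO3 (gab * gbc * gca) := so3_mul (so3_mul hgab hgbc) hgca
  have hDte : (gab * gbc * gca)ᵀ.mulVec e = (e : Fin 3 → ℝ) := by
    conv_lhs => rw [← hDe]
    exact mulVec_cancel hDso.1 e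
  -- the unit edge vector
  have hee : (e : Fin 3 → ℝ) ⬝ᵥ e = ‖e‖^2 := by
    have h1 := real_inner_self_eq_norm_sq e
    rw [inner_eq] at h1; exact h1
  have hne : (‖e‖ : ℝ) ≠ 0 := norm_ne_zero_iff.mpr he
  set u : Fin 3 → ℝ := (‖e‖)⁻¹ • (e : Fin 3 → ℝ) with hudef
  have hu : u ⬝ᵥ u = 1 := by
    rw [hudef, smul_dotProduct, dotProduct_smul, hee]
    simp only [smul_eq_mul]
    rw [← mul_assoc, ← mul_inv, ← sq, inv_mul_cancel₀ (pow_ne_zero 2 hne)]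
  have hDu : (gab * gbc * gca).mulVec u = u := by
    rw [hudef, Matrix.mulVec_smul, hDe]
  have hDtu : (gab * gbc * gca)ᵀ.mulVec u = u := by
    rw [hudef, Matrix.mulVec_smul, hDte]
  -- fixed unit vectors of the three conjugated rotations
  have hm1 : (nab : Fin 3 → ℝ) ⬝ᵥ nab = 1 := hnab'
  have hm2 : (gab.mulVec nbc) ⬝ᵥ (gab.mulVec nbc) = 1 := by
    rw [mulVec_dot, mulVec_cancel og1, hnbc']
  have hm3 : ((gab * gbc * gca).mulVec nac) ⬝ᵥ ((gab * gbc * gca).mulVec nac) = 1 := by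
    rw [mulVec_dot, mulVec_cancel hDso.1, hnac']
  have hm1u : (nab : Fin 3 → ℝ) ⬝ᵥ u = 0 := by
    rw [hudef, dotProduct_smul, heab', smul_zero]
  have hm2u : (gab.mulVec nbc) ⬝ᵥ u = 0 := by
    rw [mulVec_dot, hudef, Matrix.mulVec_smul, dotProduct_smul]
    rw [hebc', smul_zero]
  have hDe3 : gab.mulVec (gbc.mulVec (gca.mulVec e)) = (e : Fin 3 → ℝ) := by
    rw [mulVec_mulVec, mulVec_mulVec]; exact hDe
  have hgcae : gca.mulVec e = gbcᵀ.mulVec (gabᵀ.mulVec e) := by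
    conv_rhs => rw [← hDe3, mulVec_cancel og1, mulVec_cancel og2]
  have hnace : (nac : Fin 3 → ℝ) ⬝ᵥ e = 0 := by
    have h : (nac : Fin 3 → ℝ) = -(gcaᵀ.mulVec nca) := by rw [h6', neg_neg]
    rw [h, neg_dotProduct, mulVec_dot, transpose_transpose, hgcae]
    have := heca'
    rw [← mulVec_mulVec] at this
    rw [this, neg_zero]
  have hm3u : ((gab * gbc * gca).mulVec nac) ⬝ᵥ u = 0 := by
    rw [mulVec_dot, hDtu, hudef, dotProduct_smul, hnace, smul_zero]
  -- fixed-vector identities for the conjugated rotations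
  have hT1 : (gab * Xabᵀ).mulVec nab = (nab : Fin 3 → ℝ) := by
    have expand : (gab * Xabᵀ).mulVec nab = gab.mulVec (Xabᵀ.mulVec nab) := by
      rw [mulVec_mulVec]
    rw [expand, hAt, Matrix.mulVec_neg, ha, neg_neg]
  have hT2 : (gab * gbc * Xbcᵀ * gabᵀ).mulVec (gab.mulVec nbc) = gab.mulVec nbc := by
    have expand : (gab * gbc * Xbcᵀ * gabᵀ).mulVec (gab.mulVec nbc)
        = gab.mulVec (gbc.mulVec (Xbcᵀ.mulVec (gabᵀ.mulVec (gab.mulVec nbc)))) := by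
      simp only [mulVec_mulVec, mul_assoc]
    rw [expand, mulVec_cancel og1, hBt, Matrix.mulVec_neg, hb, neg_neg]
  have hT3 : (gab * gbc * gca * Xcaᵀ * gbcᵀ * gabᵀ).mulVec ((gab * gbc * gca).mulVec nac)
      = (gab * gbc * gca).mulVec nac := by
    have hw : (gab * gbc * gca).mulVec nac = gab.mulVec (gbc.mulVec (gca.mulVec nac)) := by
      rw [mulVec_mulVec, mulVec_mulVec]
    have expand : (gab * gbc * gca * Xcaᵀ * gbcᵀ * gabᵀ).mulVec ((gab * gbc * gca).mulVec nac)
        = gab.mulVec (gbc.mulVec (gca.mulVec (Xcaᵀ.mulVec (gbcᵀ.mulVec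
            (gabᵀ.mulVec ((gab * gbc * gca).mulVec nac)))))) := by
      simp only [mulVec_mulVec, mul_assoc]
    rw [expand, hw, mulVec_cancel og1, mulVec_cancel og2, hc, Matrix.mulVec_neg, hCt,
      neg_neg, hc]
  -- SO(3) closure
  have T1so : IsSO3 (gab * Xabᵀ) := so3_mul hgab (so3_transpose hXab)
  have T2so : IsSO3 (gab * gbc * Xbcᵀ * gabᵀ) :=
    so3_mul (so3_mul (so3_mul hgab hgbc) (so3_transpose hXbc)) (so3_transpose hgab)
  have T3so : IsSO3 (gab * gbc * gca * Xcaᵀ * gbcᵀ * gabᵀ) :=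
    so3_mul (so3_mul (so3_mul (so3_mul (so3_mul hgab hgbc) hgca) (so3_transpose hXca))
      (so3_transpose hgbc)) (so3_transpose hgab)
  -- the key conjugation identities
  have hF1 := lemL T1so hm1 hu hm1u hT1
  have hF2 := lemL T2so hm2 hu hm2u hT2
  have hF3 := lemL T3so hm3 hu hm3u hT3
  have hFF : rot2 u * rot2 u = 1 := rot2_sq hu
  have hDcomm : (gab * gbc * gca) * rot2 u = rot2 u * (gab * gbc * gca) :=
    rot2_comm hDu hDtu
  have hDcommT : rot2 u * (gab * gbc * gca)ᵀ = (gab * gbc * gca)ᵀ * rot2 u := by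
    have h := congrArg Matrix.transpose hDcomm
    simpa [transpose_mul, rot2_transpose] using h
  -- transposed product identity from the cocycle condition
  have hX' : ∀ Y : Matrix (Fin 3) (Fin 3) ℝ, Xab * (Xbc * (Xca * Y)) = Y := by
    intro Y
    calc Xab * (Xbc * (Xca * Y)) = (Xab * Xbc * Xca) * Y := by simp only [mul_assoc]
      _ = Y := by rw [hXcoc, one_mul]
  have hprod : (gab * Xabᵀ)ᵀ * ((gab * gbc * Xbcᵀ * gabᵀ)ᵀ
        * (gab * gbc * gca * Xcaᵀ * gbcᵀ * gabᵀ)ᵀ)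
      = (gab * gbc * gca)ᵀ := by
    simp only [transpose_mul, transpose_transpose, mul_assoc,
      lcancel og1, lcancel og2, lcancel og3, lcancel og1', lcancel og2', lcancel og3']
    simp only [← mul_assoc]
    simp only [mul_assoc, hX']
  -- assemble
  have hstep : (gab * gbc * gca)ᵀ
      = rot2 u * ((gab * Xabᵀ) * ((gab * gbc * Xbcᵀ * gabᵀ)
          * (gab * gbc * gca * Xcaᵀ * gbcᵀ * gabᵀ))) * rot2 u := by
    rw [← hprod, ← hF1, ← hF2, ← hF3]
    simp only [mul_assoc, lcancel hFF, hFF, mul_one]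
  have hT123 : (gab * Xabᵀ) * ((gab * gbc * Xbcᵀ * gabᵀ)
      * (gab * gbc * gca * Xcaᵀ * gbcᵀ * gabᵀ)) = (gab * gbc * gca)ᵀ := by
    have h2 : rot2 u * ((gab * gbc * gca)ᵀ) * rot2 u
        = (gab * Xabᵀ) * ((gab * gbc * Xbcᵀ * gabᵀ)
          * (gab * gbc * gca * Xcaᵀ * gbcᵀ * gabᵀ)) := by
      rw [hstep]
      simp only [mul_assoc, lcancel hFF, hFF, mul_one]
    have h3 : rot2 u * ((gab * gbc * gca)ᵀ) * rot2 u = (gab * gbc * gca)ᵀ := by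
      rw [hDcommT, mul_assoc, hFF, mul_one]
    rw [← h2, h3]
  have final : (gab * Xabᵀ * gab) * (gbc * Xbcᵀ * gbc) * (gca * Xcaᵀ * gca)
      = ((gab * Xabᵀ) * ((gab * gbc * Xbcᵀ * gabᵀ)
        * (gab * gbc * gca * Xcaᵀ * gbcᵀ * gabᵀ))) * (gab * gbc * gca) := by
    simp only [mul_assoc, lcancel og1, lcancel og2, lcancel og3,
      lcancel og1', lcancel og2', lcancel og3']
  rw [final, hT123]
  exact hDso.1
end

section
/- Let X : Fin 5 → SO(3), let n assign to each ordered pair (a,b) of distinct elements of Fin 5 a unit vector n_{ab} ∈ ℝ³, and let g assign to each such pair an element g_{ab} ∈ SO(3) with g_{ba} = (g_{ab})⁻¹. Suppose: (i) X_b n_{ba} = −X_a n_{ab} for all a ≠ b; (ii) g_{ba} n_{ab} = −n_{ba} for all a ≠ b; and (iii) for every triple of pairwise distinct a, b, c there exists a nonzero vector e ∈ ℝ³ with (g_{ab} g_{bc} g_{ca}) e = e, ⟨n_{ab}, e⟩ = 0, ⟨n_{bc}, g_{ba} e⟩ = 0 and ⟨n_{ca}, g_{cb} g_{ba} e⟩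 = 0. Then there exists X' : Fin 5 → SO(3) such that X'_b n_{ba} = −X'_a n_{ab} for all a ≠ b, and (X'_a)⁻¹ X'_b = g_{ab} · ((X_b)⁻¹ X_a) · g_{ab} for all a ≠ b. -/
open scoped RealInnerProductSpace

section Aux

open Matrix

abbrev M3 := Matrix (Fin 3) (Fin 3) ℝ
abbrev V3 := Fin 3 → ℝ

lemma IsSO3.mul_tr {A : M3} (hA : IsSO3 A) : A * Aᵀ = 1 := mul_eq_one_comm.mp hA.1

lemma IsSO3.one : IsSO3 (1 : M3) := by constructor <;> simp

lemma IsSO3.mul {A B : M3} (hA : IsSO3 A) (hB : IsSO3 B) : IsSO3 (A * B) := by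
  constructor
  · rw [Matrix.transpose_mul]
    calc Bᵀ * Aᵀ * (A * B) = Bᵀ * (Aᵀ * A) * B := by noncomm_ring
    _ = 1 := by rw [hA.1, Matrix.mul_one, hB.1]
  · rw [Matrix.det_mul, hA.2, hB.2, one_mul]

lemma IsSO3.transpose {A : M3} (hA : IsSO3 A) : IsSO3 Aᵀ := by
  refine ⟨?_, by rw [Matrix.det_transpose]; exact hA.2⟩
  rw [Matrix.transpose_transpose]; exact hA.mul_tr

lemma IsSO3.inv_eq {A : M3} (hA : IsSO3 A) : A⁻¹ = Aᵀ := Matrix.inv_eq_left_inv hA.1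

lemma IsSO3.tr_mulVec {A : M3} (hA : IsSO3 A) (x : V3) :
    Aᵀ.mulVec (A.mulVec x) = x := by
  rw [Matrix.mulVec_mulVec, hA.1, Matrix.one_mulVec]

lemma IsSO3.mulVec_tr {A : M3} (hA : IsSO3 A) (x : V3) :
    A.mulVec (Aᵀ.mulVec x) = x := by
  rw [Matrix.mulVec_mulVec, hA.mul_tr, Matrix.one_mulVec]

lemma IsSO3.dot {A : M3} (hA : IsSO3 A) (x y : V3) :
    A.mulVec x ⬝ᵥ A.mulVec y = x ⬝ᵥ y := by
  rw [Matrix.dotProduct_mulVec, ← Matrix.mulVec_transpose, Matrix.mulVec_mulVec, hA.1,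
    Matrix.one_mulVec]

lemma IsSO3.ne_zero {A : M3} (hA : IsSO3 A) {x : V3} (hx : x ≠ 0) : A.mulVec x ≠ 0 := by
  intro h
  apply hx
  have := congrArg (Aᵀ.mulVec) h
  rwa [hA.tr_mulVec, Matrix.mulVec_zero] at this

noncomputable def reflM (x : V3) : M3 := 1 - (2 / (x ⬝ᵥ x)) • vecMulVec x x

lemma vecMulVec_mulVec (x y z : V3) : (vecMulVec x y).mulVec z = (y ⬝ᵥ z) • x := by
  ext i
  simp [vecMulVec, Matrix.mulVec, dotProduct, Fin.sum_univ_three]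
  ring

lemma reflM_mulVec (x y : V3) :
    (reflM x).mulVec y = y - (2 * (x ⬝ᵥ y) / (x ⬝ᵥ x)) • x := by
  rw [reflM, Matrix.sub_mulVec, Matrix.one_mulVec, Matrix.smul_mulVec, vecMulVec_mulVec,
    smul_smul]
  congr 1
  ring

lemma reflM_transpose (x : V3) : (reflM x)ᵀ = reflM x := by
  ext i j
  simp [reflM, vecMulVec, Matrix.one_apply, Matrix.transpose_apply]
  by_cases h : i = j
  · simp [h]
  · rw [if_neg h, if_neg (fun hh => h hh.symm)]
    ring

lemma reflM_mulVec_self (x : V3) (hx : x ≠ 0) : (reflM x).mulVec x = -x := by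
  have hq : x ⬝ᵥ x ≠ 0 := fun h => hx (dotProduct_self_eq_zero.mp h)
  rw [reflM_mulVec, mul_div_assoc, div_self hq]
  module

lemma reflM_mulVec_orth (x y : V3) (h : x ⬝ᵥ y = 0) : (reflM x).mulVec y = y := by
  rw [reflM_mulVec, h]
  simp

lemma eq_of_mulVec_eq {A B : M3} (h : ∀ v : V3, A.mulVec v = B.mulVec v) : A = B := by
  ext i j
  have := congrFun (h (Pi.single j 1)) i
  simpa [Matrix.mulVec_single] using this

lemma reflM_mul_self (x : V3) (hx : x ≠ 0) : reflM x * reflM x = 1 := by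
  have hq : x ⬝ᵥ x ≠ 0 := fun h => hx (dotProduct_self_eq_zero.mp h)
  apply eq_of_mulVec_eq
  intro v
  have h1 : 2 * (x ⬝ᵥ (v - (2 * (x ⬝ᵥ v) / (x ⬝ᵥ x)) • x)) / (x ⬝ᵥ x)
      = -(2 * (x ⬝ᵥ v) / (x ⬝ᵥ x)) := by
    rw [dotProduct_sub, dotProduct_smul, smul_eq_mul,
      div_mul_cancel₀ _ hq]
    ring
  rw [← Matrix.mulVec_mulVec, Matrix.one_mulVec, reflM_mulVec x v, reflM_mulVec, h1]
  module

lemma bac_cab (a b c : V3) :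
    crossProduct a (crossProduct b c) = (a ⬝ᵥ c) • b - (a ⬝ᵥ b) • c := by
  ext i
  fin_cases i <;>
    simp [crossProduct, dotProduct, Fin.sum_univ_three] <;> ring

lemma frame_det {u E : V3} (hu : u ⬝ᵥ u = 1) (huE : u ⬝ᵥ E = 0) :
    Matrix.det ![u, E, crossProduct u E] = E ⬝ᵥ E := by
  rw [← triple_product_eq_det]
  rw [bac_cab, dotProduct_sub, dotProduct_smul, dotProduct_smul,
    smul_eq_mul, smul_eq_mul, hu, dotProduct_comm E u, huE]
  ring

lemma frame_decomp {u E : V3} (hu : u ⬝ᵥ u = 1) (hE : E ≠ 0) (huE : u ⬝ᵥ E = 0) (z : V3) :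
    z = (u ⬝ᵥ z) • u + ((E ⬝ᵥ z) / (E ⬝ᵥ E)) • E
      + ((crossProduct u E ⬝ᵥ z) / (E ⬝ᵥ E)) • crossProduct u E := by
  have hq : E ⬝ᵥ E ≠ 0 := fun h => hE (dotProduct_self_eq_zero.mp h)
  set F := crossProduct u E with hF
  have huF : u ⬝ᵥ F = 0 := dot_self_cross u E
  have hEF : E ⬝ᵥ F = 0 := dot_cross_self u E
  have hFF : F ⬝ᵥ F = E ⬝ᵥ E := by
    rw [hF, cross_dot_cross, hu, huE]
    ring
  set P : M3 := ![u, E, F] with hP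
  have hdet : IsUnit P.det := by
    rw [hP, frame_det hu huE]
    exact (isUnit_iff_ne_zero).mpr hq
  have hinj := Matrix.mulVec_injective_iff_isUnit.mpr ((Matrix.isUnit_iff_isUnit_det P).mpr hdet)
  set d := z - ((u ⬝ᵥ z) • u + ((E ⬝ᵥ z) / (E ⬝ᵥ E)) • E + ((F ⬝ᵥ z) / (E ⬝ᵥ E)) • F) with hd
  have hud : u ⬝ᵥ d = 0 := by
    rw [hd, dotProduct_sub, dotProduct_add, dotProduct_add,
      dotProduct_smul, dotProduct_smul, dotProduct_smul,
      hu, huE, huF]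
    simp
  have hEd : E ⬝ᵥ d = 0 := by
    rw [hd, dotProduct_sub, dotProduct_add, dotProduct_add,
      dotProduct_smul, dotProduct_smul, dotProduct_smul,
      dotProduct_comm E u, huE, hEF]
    simp only [smul_eq_mul, mul_zero, zero_add, add_zero, smul_zero]
    rw [div_mul_cancel₀ _ hq, sub_self]
  have hFd : F ⬝ᵥ d = 0 := by
    rw [hd, dotProduct_sub, dotProduct_add, dotProduct_add,
      dotProduct_smul, dotProduct_smul, dotProduct_smul,
      dotProduct_comm F u, huF, dotProduct_comm F E, hEF, hFF]
    simp only [smul_eq_mul, mul_zero, zero_add, add_zero, smul_zero]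
    rw [div_mul_cancel₀ _ hq, sub_self]
  have hzero : P.mulVec d = 0 := by
    ext i
    fin_cases i
    · simpa [hP, Matrix.mulVec, dotProduct, Fin.sum_univ_three] using hud
    · simpa [hP, Matrix.mulVec, dotProduct, Fin.sum_univ_three] using hEd
    · simpa [hP, Matrix.mulVec, dotProduct, Fin.sum_univ_three] using hFd
  have : d = 0 := by
    apply hinj
    rw [hzero, Matrix.mulVec_zero]
  have h0 : z - ((u ⬝ᵥ z) • u + ((E ⬝ᵥ z) / (E ⬝ᵥ E)) • E + ((F ⬝ᵥ z) / (E ⬝ᵥ E)) • F) = 0 := this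
  exact sub_eq_zero.mp h0



lemma cross_equivariant {A : M3} (hA : Aᵀ * A = 1) (hdet : A.det = 1) (x y : V3) :
    A.mulVec (crossProduct x y) = crossProduct (A.mulVec x) (A.mulVec y) := by
  have key : Aᵀ.mulVec (crossProduct (A.mulVec x) (A.mulVec y)) = A.det • crossProduct x y := by
    ext i
    fin_cases i <;>
      simp [crossProduct, Matrix.mulVec, dotProduct, Fin.sum_univ_three,
        Matrix.det_fin_three, Matrix.transpose_apply] <;> ring
  rw [hdet, one_smul] at key
  calc A.mulVec (crossProduct x y)
      = A.mulVec (Aᵀ.mulVec (crossProduct (A.mulVec x) (A.mulVec y))) := by rw [key]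
    _ = _ := by
        rw [Matrix.mulVec_mulVec, mul_eq_one_comm.mp hA, Matrix.one_mulVec]

lemma eq_of_frame_eq {u E : V3} (hu : u ⬝ᵥ u = 1) (hE : E ≠ 0) (huE : u ⬝ᵥ E = 0)
    {M N : M3} (h1 : M.mulVec u = N.mulVec u) (h2 : M.mulVec E = N.mulVec E)
    (h3 : M.mulVec (crossProduct u E) = N.mulVec (crossProduct u E)) : M = N := by
  apply eq_of_mulVec_eq
  intro v
  have hdec := frame_decomp hu hE huE v
  rw [hdec]
  simp only [Matrix.mulVec_add, Matrix.mulVec_smul, h1, h2, h3]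

lemma eq2 {R : M3} (hR : IsSO3 R) {u E : V3} (hu : u ⬝ᵥ u = 1)
    (hRu : R.mulVec u = u) (hE : E ≠ 0) (huE : u ⬝ᵥ E = 0) :
    R * R = reflM (R.mulVec E) * reflM E := by
  have hq : E ⬝ᵥ E ≠ 0 := fun h => hE (dotProduct_self_eq_zero.mp h)
  set F := crossProduct u E with hF
  have huF : u ⬝ᵥ F = 0 := dot_self_cross u E
  have hEF : E ⬝ᵥ F = 0 := dot_cross_self u E
  have hFF : F ⬝ᵥ F = E ⬝ᵥ E := by
    rw [hF, cross_dot_cross, hu, huE]; ring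
  have huRE : u ⬝ᵥ R.mulVec E = 0 := by
    conv_lhs => rw [← hRu]
    rw [hR.dot]; exact huE
  set q := E ⬝ᵥ E with hqdef
  set α := (E ⬝ᵥ R.mulVec E) / q with hα
  set β := (F ⬝ᵥ R.mulVec E) / q with hβ
  have hREdec : R.mulVec E = α • E + β • F := by
    have h := frame_decomp hu hE huE (R.mulVec E)
    rwa [huRE, zero_smul, zero_add] at h
  have hRF : R.mulVec F = (-β) • E + α • F := by
    have hcross : R.mulVec F = crossProduct u (R.mulVec E) := by
      rw [hF, cross_equivariant hR.1 hR.2, hRu]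
    rw [hcross, hREdec, map_add, LinearMap.map_smul, LinearMap.map_smul]
    have h1 : crossProduct u F = -E := by
      rw [hF, bac_cab, huE, hu]
      module
    rw [← hF, h1]
    module
  have hRERE : R.mulVec E ⬝ᵥ R.mulVec E = q := hR.dot E E
  have hERE : E ⬝ᵥ R.mulVec E = α * q := by
    rw [hα, div_mul_cancel₀ _ hq]
  have hFRE : F ⬝ᵥ R.mulVec E = β * q := by
    rw [hβ, div_mul_cancel₀ _ hq]
  have hab : α ^ 2 + β ^ 2 = 1 := by
    have h2 : (α • E + β • F) ⬝ᵥ (α • E + β • F) = q := by rw [← hREdec]; exact hRERE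
    rw [add_dotProduct, smul_dotProduct, smul_dotProduct,
      dotProduct_add, dotProduct_add, dotProduct_smul,
      dotProduct_smul, dotProduct_smul, dotProduct_smul,
      hEF, hFF, dotProduct_comm F E, hEF] at h2
    simp only [smul_eq_mul] at h2
    rw [← hqdef] at h2
    have h3 : (α ^ 2 + β ^ 2) * q = 1 * q := by linear_combination h2
    exact mul_right_cancel₀ hq h3
  -- now prove matrix equality on the frame u, E, F
  apply eq_of_frame_eq hu hE huE
  · rw [← Matrix.mulVec_mulVec, hRu, hRu, ← Matrix.mulVec_mulVec,
      reflM_mulVec_orth E u (by rwa [dotProduct_comm]),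
      reflM_mulVec_orth _ u (by rwa [dotProduct_comm])]
  · have hc : 2 * (α * q) / q = 2 * α := by
      rw [mul_div_assoc, mul_div_assoc, div_self hq, mul_one]
    rw [← Matrix.mulVec_mulVec, ← Matrix.mulVec_mulVec,
      reflM_mulVec_self E hE, Matrix.mulVec_neg, reflM_mulVec,
      hRERE, dotProduct_comm _ E, hERE, hc, hREdec]
    simp only [Matrix.mulVec_add, Matrix.mulVec_smul]
    rw [hREdec, hRF]
    match_scalars
    · linear_combination -hab
    · ring
  · have hc : 2 * (β * q) / q = 2 * β := by
      rw [mul_div_assoc, mul_div_assoc, div_self hq, mul_one]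
    rw [← hF, ← Matrix.mulVec_mulVec, ← Matrix.mulVec_mulVec,
      reflM_mulVec_orth E F hEF, reflM_mulVec,
      hRERE, dotProduct_comm _ F, hFRE, hc, hRF]
    simp only [Matrix.mulVec_add, Matrix.mulVec_smul]
    rw [hREdec, hRF]
    match_scalars
    · ring
    · linear_combination hab


lemma so3_core {A B C : M3} (hA : IsSO3 A) (hB : IsSO3 B) (hC : IsSO3 C)
    {u v w E : V3} (hu : u ⬝ᵥ u = 1) (hv : v ⬝ᵥ v = 1) (hw : w ⬝ᵥ w = 1)
    (hE : E ≠ 0)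
    (hAu : A.mulVec u = u) (hBv : B.mulVec v = v) (hCw : C.mulVec w = w)
    (h1 : u ⬝ᵥ E = 0) (h2 : v ⬝ᵥ A.mulVec E = 0) (h3 : w ⬝ᵥ B.mulVec (A.mulVec E) = 0)
    (h4 : Cᵀ.mulVec E = B.mulVec (A.mulVec E)) :
    Aᵀ * Aᵀ * (Bᵀ * Bᵀ) = C * C := by
  have hAE : A.mulVec E ≠ 0 := hA.ne_zero hE
  have hBAE : B.mulVec (A.mulVec E) ≠ 0 := hB.ne_zero hAE
  have eA : A * A = reflM (A.mulVec E) * reflM E := eq2 hA hu hAu hE h1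
  have eB : B * B = reflM (B.mulVec (A.mulVec E)) * reflM (A.mulVec E) :=
    eq2 hB hv hBv hAE h2
  have eC : C * C = reflM E * reflM (B.mulVec (A.mulVec E)) := by
    have h5 : C.mulVec (B.mulVec (A.mulVec E)) = E := by
      rw [← h4, hC.mulVec_tr]
    have h := eq2 hC hw hCw hBAE h3
    rwa [h5] at h
  have eAt : Aᵀ * Aᵀ = reflM E * reflM (A.mulVec E) := by
    have h := congrArg Matrix.transpose eA
    rwa [Matrix.transpose_mul, Matrix.transpose_mul, reflM_transpose, reflM_transpose] at h
  have eBt : Bᵀ * Bᵀ = reflM (A.mulVec E) * reflM (B.mulVec (A.mulVec E)) := by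
    have h := congrArg Matrix.transpose eB
    rwa [Matrix.transpose_mul, Matrix.transpose_mul, reflM_transpose, reflM_transpose] at h
  rw [eAt, eBt, eC]
  calc reflM E * reflM (A.mulVec E) * (reflM (A.mulVec E) * reflM (B.mulVec (A.mulVec E)))
      = reflM E * (reflM (A.mulVec E) * reflM (A.mulVec E)) * reflM (B.mulVec (A.mulVec E)) := by
        noncomm_ring
    _ = reflM E * reflM (B.mulVec (A.mulVec E)) := by
        rw [reflM_mul_self _ hAE, Matrix.mul_one]

lemma IsSO3.cancel_tl {A : M3} (h : IsSO3 A) (B : M3) : Aᵀ * (A * B) = B := by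
  rw [← Matrix.mul_assoc, h.1, Matrix.one_mul]

lemma IsSO3.cancel_lt {A : M3} (h : IsSO3 A) (B : M3) : A * (Aᵀ * B) = B := by
  rw [← Matrix.mul_assoc, h.mul_tr, Matrix.one_mul]

lemma inner_eq_dot (x y : EuclideanSpace ℝ (Fin 3)) : ⟪x, y⟫ = (x : V3) ⬝ᵥ (y : V3) := by
  simp [PiLp.inner_apply, dotProduct, mul_comm]

lemma matVec_def (A : M3) (v : EuclideanSpace ℝ (Fin 3)) : matVec A v = A.mulVec v := rfl


/-- The involution applied to a solution of the critical point equations of the 15j symbol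
with geometric boundary data produces a second solution `X'` with
`(X'_a)⁻¹ X'_b = g_ab ((X_b)⁻¹ X_a) g_ab`. -/
theorem involution_second_solution
    (X : Fin 5 → Matrix (Fin 3) (Fin 3) ℝ) (hX : ∀ a, IsSO3 (X a))
    (n : Fin 5 → Fin 5 → EuclideanSpace ℝ (Fin 3))
    (hn : ∀ a b : Fin 5, a ≠ b → ‖n a b‖ = 1)
    (g : Fin 5 → Fin 5 → Matrix (Fin 3) (Fin 3) ℝ)
    (hg : ∀ a b : Fin 5, a ≠ b → IsSO3 (g a b))
    (hginv : ∀ a b : Fin 5, a ≠ b → g b a = (g a b)⁻¹)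
    (hcrit : ∀ a b : Fin 5, a ≠ b → matVec (X b) (n b a) = - matVec (X a) (n a b))
    (hglue : ∀ a b : Fin 5, a ≠ b → matVec (g b a) (n a b) = - n b a)
    (hhinge : ∀ a b c : Fin 5, a ≠ b → b ≠ c → a ≠ c →
      ∃ e : EuclideanSpace ℝ (Fin 3), e ≠ 0 ∧
        matVec (g a b * g b c * g c a) e = e ∧
        ⟪n a b, e⟫ = 0 ∧
        ⟪n b c, matVec (g b a) e⟫ = 0 ∧
        ⟪n c a, matVec (g c b * g b a) e⟫ = 0) :
    ∃ X' : Fin 5 → Matrix (Fin 3) (Fin 3) ℝ,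
      (∀ a, IsSO3 (X' a)) ∧
      (∀ a b : Fin 5, a ≠ b → matVec (X' b) (n b a) = - matVec (X' a) (n a b)) ∧
      (∀ a b : Fin 5, a ≠ b →
        (X' a)⁻¹ * X' b = g a b * ((X b)⁻¹ * X a) * g a b) := by
  classical
  have hgT : ∀ a b : Fin 5, a ≠ b → g b a = (g a b)ᵀ := fun a b hab => by
    rw [hginv a b hab, (hg a b hab).inv_eq]
  have hcrit' : ∀ a b : Fin 5, a ≠ b →
      (X b).mulVec (n b a) = -((X a).mulVec (n a b)) := fun a b hab => congrArg WithLp.ofLp (hcrit a b hab)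
  have hglue' : ∀ a b : Fin 5, a ≠ b →
      (g b a).mulVec (n a b) = -(n b a : V3) := fun a b hab => congrArg WithLp.ofLp (hglue a b hab)
  have hnunit : ∀ a b : Fin 5, a ≠ b → (n a b : V3) ⬝ᵥ (n a b : V3) = 1 := by
    intro a b hab
    have h2 : ⟪n a b, n a b⟫ = 1 := by
      rw [real_inner_self_eq_norm_sq, hn a b hab]
      norm_num
    rwa [inner_eq_dot] at h2
  set Y : Fin 5 → Fin 5 → M3 := fun a b => g a b * ((X b)⁻¹ * X a) * g a b with hYset
  have hYdef : ∀ a b, Y a b = g a b * ((X b)⁻¹ * X a) * g a b := fun _ _ => rfl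
  have hYso3 : ∀ a b : Fin 5, a ≠ b → IsSO3 (Y a b) := by
    intro a b hab
    rw [hYdef, (hX b).inv_eq]
    exact ((hg a b hab).mul (((hX b).transpose).mul (hX a))).mul (hg a b hab)
  have hYn : ∀ a b : Fin 5, a ≠ b → (Y a b).mulVec (n b a) = -(n a b : V3) := by
    intro a b hab
    rw [hYdef, (hX b).inv_eq, ← Matrix.mulVec_mulVec, ← Matrix.mulVec_mulVec,
      ← Matrix.mulVec_mulVec, hglue' b a hab.symm, Matrix.mulVec_neg, ← hcrit' a b hab,
      (hX b).tr_mulVec, hglue' b a hab.symm]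
  have hYinv1 : ∀ a b : Fin 5, a ≠ b → Y a b * Y b a = 1 := by
    intro a b hab
    rw [hYdef, hYdef, (hX a).inv_eq, (hX b).inv_eq, hgT a b hab]
    simp only [Matrix.mul_assoc]
    rw [(hg a b hab).cancel_lt, (hX a).cancel_lt, (hX b).cancel_tl]
    exact (hg a b hab).mul_tr
  have hTt : ∀ a b : Fin 5, a ≠ b →
      (X b * g b a * (X a)ᵀ)ᵀ = X a * g a b * (X b)ᵀ := by
    intro a b hab
    rw [hgT a b hab, Matrix.transpose_mul, Matrix.transpose_mul, Matrix.transpose_transpose,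
      Matrix.transpose_transpose, ← Matrix.mul_assoc]
  have hYT : ∀ a b : Fin 5, a ≠ b →
      Y a b = (X a)ᵀ * (X a * g a b * (X b)ᵀ * (X a * g a b * (X b)ᵀ)) * X b := by
    intro a b hab
    rw [hYdef, (hX b).inv_eq]
    simp only [Matrix.mul_assoc]
    rw [(hX b).1, Matrix.mul_one, (hX a).cancel_tl]
  have hYcoc : ∀ a b c : Fin 5, a ≠ b → b ≠ c → a ≠ c → Y a b * Y b c = Y a c := by
    intro a b c hab hbc hac
    obtain ⟨e, he0, heD, hi1, hi2, hi3⟩ := hhinge a b c hab hbc hac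
    have he0' : (e : V3) ≠ 0 := fun h => he0 (WithLp.ofLp_injective 2 h)
    have heD' : (g a b).mulVec ((g b c).mulVec ((g c a).mulVec (e : V3))) = e := by
      rw [Matrix.mulVec_mulVec, Matrix.mulVec_mulVec]
      exact congrArg WithLp.ofLp heD
    have hi1' : (n a b : V3) ⬝ᵥ (e : V3) = 0 := by rwa [inner_eq_dot] at hi1
    have hi2' : (n b c : V3) ⬝ᵥ (g b a).mulVec e = 0 := by rwa [inner_eq_dot] at hi2
    have hi3' : (n c a : V3) ⬝ᵥ (g c b).mulVec ((g b a).mulVec e) = 0 := by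
      rw [Matrix.mulVec_mulVec]
      rwa [inner_eq_dot] at hi3
    have act : ∀ (P Q R : M3), IsSO3 R → ∀ z : V3,
        (P * Q * Rᵀ).mulVec (R.mulVec z) = P.mulVec (Q.mulVec z) := by
      intro P Q R hR z
      rw [← Matrix.mulVec_mulVec, ← Matrix.mulVec_mulVec, hR.tr_mulVec]
    have hAso : IsSO3 (X b * g b a * (X a)ᵀ) :=
      ((hX b).mul (hg b a hab.symm)).mul (hX a).transpose
    have hBso : IsSO3 (X c * g c b * (X b)ᵀ) :=
      ((hX c).mul (hg c b hbc.symm)).mul (hX b).transpose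
    have hCso : IsSO3 (X a * g a c * (X c)ᵀ) :=
      ((hX a).mul (hg a c hac)).mul (hX c).transpose
    have hu1 : (X a).mulVec (n a b) ⬝ᵥ (X a).mulVec (n a b) = 1 := by
      rw [(hX a).dot]; exact hnunit a b hab
    have hv1 : (X b).mulVec (n b c) ⬝ᵥ (X b).mulVec (n b c) = 1 := by
      rw [(hX b).dot]; exact hnunit b c hbc
    have hw1 : (X c).mulVec (n c a) ⬝ᵥ (X c).mulVec (n c a) = 1 := by
      rw [(hX c).dot]; exact hnunit c a hac.symm
    have hE0 : (X a).mulVec e ≠ 0 := (hX a).ne_zero he0'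
    have hAu : (X b * g b a * (X a)ᵀ).mulVec ((X a).mulVec (n a b)) = (X a).mulVec (n a b) := by
      rw [act _ _ _ (hX a), hglue' a b hab, Matrix.mulVec_neg, hcrit' a b hab, neg_neg]
    have hBv : (X c * g c b * (X b)ᵀ).mulVec ((X b).mulVec (n b c)) = (X b).mulVec (n b c) := by
      rw [act _ _ _ (hX b), hglue' b c hbc, Matrix.mulVec_neg, hcrit' b c hbc, neg_neg]
    have hCw : (X a * g a c * (X c)ᵀ).mulVec ((X c).mulVec (n c a)) = (X c).mulVec (n c a) := by
      rw [act _ _ _ (hX c), hglue' c a hac.symm, Matrix.mulVec_neg, hcrit' c a hac.symm, neg_neg]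
    have hAE : (X b * g b a * (X a)ᵀ).mulVec ((X a).mulVec e)
        = (X b).mulVec ((g b a).mulVec e) := act _ _ _ (hX a) _
    have hBAE : (X c * g c b * (X b)ᵀ).mulVec ((X b * g b a * (X a)ᵀ).mulVec ((X a).mulVec e))
        = (X c).mulVec ((g c b).mulVec ((g b a).mulVec e)) := by
      rw [hAE]; exact act _ _ _ (hX b) _
    have h1' : (X a).mulVec (n a b) ⬝ᵥ (X a).mulVec e = 0 := by
      rw [(hX a).dot]; exact hi1'
    have h2' : (X b).mulVec (n b c) ⬝ᵥ (X b * g b a * (X a)ᵀ).mulVec ((X a).mulVec e) = 0 := by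
      rw [hAE, (hX b).dot]; exact hi2'
    have h3' : (X c).mulVec (n c a) ⬝ᵥ
        (X c * g c b * (X b)ᵀ).mulVec ((X b * g b a * (X a)ᵀ).mulVec ((X a).mulVec e)) = 0 := by
      rw [hBAE, (hX c).dot]; exact hi3'
    have s1 : (g b c).mulVec ((g c a).mulVec e) = (g b a).mulVec e := by
      have h := congrArg (fun z => (g b a).mulVec z) heD'
      simp only at h
      rw [hgT a b hab] at h ⊢
      rwa [(hg a b hab).tr_mulVec] at h
    have s2 : (g c a).mulVec (e : V3) = (g c b).mulVec ((g b a).mulVec e) := by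
      have h := congrArg (fun z => (g c b).mulVec z) s1
      simp only at h
      rw [hgT b c hbc] at h ⊢
      rw [(hg b c hbc).tr_mulVec] at h
      exact h
    have h4' : (X a * g a c * (X c)ᵀ)ᵀ.mulVec ((X a).mulVec e)
        = (X c * g c b * (X b)ᵀ).mulVec ((X b * g b a * (X a)ᵀ).mulVec ((X a).mulVec e)) := by
      rw [hBAE, hTt c a hac.symm, act _ _ _ (hX a), s2]
    have hcore := so3_core hAso hBso hCso hu1 hv1 hw1 hE0 hAu hBv hCw h1' h2' h3' h4'
    rw [hTt a b hab, hTt b c hbc] at hcore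
    rw [hYT a b hab, hYT b c hbc, hYT a c hac]
    have hcore' := congrArg (fun M => M * X c) hcore
    simp only [Matrix.mul_assoc] at hcore' ⊢
    rw [(hX b).cancel_lt, hcore']
  -- construct X'
  refine ⟨fun a => if a = 0 then 1 else Y 0 a, ?_, ?_, ?_⟩
  · intro a
    dsimp only
    split_ifs with h
    · exact IsSO3.one
    · exact hYso3 0 a (fun hh => h hh.symm)
  · intro a b hab
    have hrel : (if b = 0 then 1 else Y 0 b) = (if a = 0 then 1 else Y 0 a) * Y a b := by
      by_cases ha : a = 0
      · subst ha
        rw [if_pos rfl, if_neg (fun h => hab h.symm), Matrix.one_mul]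
      · rw [if_neg ha]
        by_cases hb : b = 0
        · subst hb
          rw [if_pos rfl]
          exact (hYinv1 0 a (fun h => ha h.symm)).symm
        · rw [if_neg hb]
          exact (hYcoc 0 a b (fun h => ha h.symm) hab (fun h => hb h.symm)).symm
    show matVec (if b = 0 then 1 else Y 0 b) (n b a)
        = -matVec (if a = 0 then 1 else Y 0 a) (n a b)
    apply WithLp.ofLp_injective 2
    rw [WithLp.ofLp_neg, matVec_def, matVec_def, hrel, ← Matrix.mulVec_mulVec, hYn a b hab, Matrix.mulVec_neg]
  · intro a b hab
    show (if a = 0 then 1 else Y 0 a)⁻¹ * (if b = 0 then 1 else Y 0 b)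
        = g a b * ((X b)⁻¹ * X a) * g a b
    rw [← hYdef a b]
    by_cases ha : a = 0
    · subst ha
      have hone : (1 : M3)⁻¹ = 1 := Matrix.inv_eq_left_inv (by simp)
      rw [if_pos rfl, if_neg (fun h => hab h.symm), hone, Matrix.one_mul]
    · rw [if_neg ha]
      have hYinv0 : (Y 0 a)⁻¹ = Y a 0 := Matrix.inv_eq_left_inv (hYinv1 a 0 ha)
      by_cases hb : b = 0
      · subst hb
        rw [if_pos rfl, hYinv0, Matrix.mul_one]
      · rw [if_neg hb, hYinv0]
        exact hYcoc a 0 b ha (fun h => hb h.symm) hab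


end Aux
end
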